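/- arXiv:2305.08126 — 3 statements merged into one kernel-verified Lean document; each statement's English description precedes it below -/
import Mathlib

section
/- Achievability for maximum distortion (Lemma 1): With sufficient common randomness, the rate–distortion region for the maximum distortion d_max coincides with that for the average distortion d_avg: for every rate R and distortion level ε, the pair (R,ε) lies in the closure of the set of pairs achievable for d_max by (2^{nR}, 2^{nR₀}, n) stochastic codes for some common-randomness rate R₀ ≥ 0 if and only if (R,ε) lies in the closure of the set of pairs achievable for d_avg by (2^{nR}, n) deterministic codes. -/
open Finset Filter Topology Classical

noncomputable section

/-- `p` is a probability mass function on a finite type. -/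
def IsPMF {α : Type*} [Fintype α] (p : α → ℝ) : Prop :=
  (∀ a, 0 ≤ p a) ∧ ∑ a, p a = 1

/-- A learning rule assigns a pmf on models to every dataset. -/
def IsRule {S H : Type*} [Fintype H] (Q : S → H → ℝ) : Prop :=
  ∀ s, IsPMF (Q s)

/-- True loss `L_c(q)` of a belief `q` over models on concept `c`. -/
def trueLoss {C H : Type*} [Fintype H] (L : C → H → ℝ) (c : C) (q : H → ℝ) : ℝ :=
  ∑ h, q h * L c h

/-- Semantic distortion `d_sem(Q, Q̂)` between two learning rules. -/
def dsem {C S H : Type*} [Fintype C] [Fintype S] [Fintype H]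
    (PCS : C → S → ℝ) (L : C → H → ℝ) (Q Qhat : S → H → ℝ) : ℝ :=
  ∑ c, ∑ s, PCS c s * (trueLoss L c (Qhat s) - trueLoss L c (Q s))

/-- Number of messages `⌈2^{nR}⌉` of a `(2^{nR}, n)` code. -/
def numMsg (R : ℝ) (n : ℕ) : ℕ := ⌈(2 : ℝ) ^ ((n : ℝ) * R)⌉₊

/-- Conditional law `Q̂ᵢ(h|s) = P(Ĥᵢ = h | Sᵢ = s)` of the `i`-th decoded model,
induced by a deterministic blocklength-`n` map `Sⁿ → Hⁿ` when `S₁,…,Sₙ` are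
i.i.d. with law `PS`. -/
def inducedRule {S H : Type*} [Fintype S] (PS : S → ℝ) {n : ℕ}
    (code : (Fin n → S) → (Fin n → H)) (i : Fin n) : S → H → ℝ := fun s h =>
  (∑ sn : Fin n → S, if sn i = s ∧ code sn i = h then ∏ j, PS (sn j) else 0) / PS s

/-- Conditional law `Q̂ᵢ(h|s) = P(Ĥᵢ = h | Sᵢ = s)` induced by a stochastic
blocklength-`n` code with common randomness `ω ∼ pw` independent of `Sⁿ`. -/
def inducedRuleStoch {S H Ω : Type*} [Fintype S] [Fintype Ω] (PS : S → ℝ)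
    (pw : Ω → ℝ) {n : ℕ} (code : (Fin n → S) → Ω → (Fin n → H)) (i : Fin n) :
    S → H → ℝ := fun s h =>
  (∑ ω : Ω, ∑ sn : Fin n → S,
      if sn i = s ∧ code sn ω i = h then pw ω * ∏ j, PS (sn j) else 0) / PS s

/-- Average per-model distortion `d_avg` of a deterministic blocklength-`n` code. -/
def davgCode {C S H : Type*} [Fintype C] [Fintype S] [Fintype H]
    (PCS : C → S → ℝ) (PS : S → ℝ) (L : C → H → ℝ) (Q : S → H → ℝ) {n : ℕ}
    (code : (Fin n → S) → (Fin n → H)) : ℝ :=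
  (1 / (n : ℝ)) * ∑ i : Fin n, dsem PCS L Q (inducedRule PS code i)

/-- Maximum per-model distortion `d_max` of a stochastic blocklength-`n` code. -/
def dmaxCode {C S H Ω : Type*} [Fintype C] [Fintype S] [Fintype H] [Fintype Ω]
    (PCS : C → S → ℝ) (PS : S → ℝ) (L : C → H → ℝ) (Q : S → H → ℝ)
    (pw : Ω → ℝ) {n : ℕ} (code : (Fin n → S) → Ω → (Fin n → H)) : ℝ :=
  ⨆ i : Fin n, dsem PCS L Q (inducedRuleStoch PS pw code i)

/-- `(R, ε)` is achievable for `d_avg` by deterministic `(2^{nR}, n)` codes. -/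
def AchAvg {C S H : Type*} [Fintype C] [Fintype S] [Fintype H]
    (PCS : C → S → ℝ) (PS : S → ℝ) (L : C → H → ℝ) (Q : S → H → ℝ)
    (R ε : ℝ) : Prop :=
  ∃ (f : ∀ n : ℕ, (Fin n → S) → Fin (numMsg R n))
    (g : ∀ n : ℕ, Fin (numMsg R n) → (Fin n → H)) (l : ℝ),
      Tendsto (fun n : ℕ => davgCode PCS PS L Q (fun sn => g n (f n sn)))
        atTop (nhds l) ∧ l < ε

/-- `(R, ε)` is achievable for `d_max` by stochastic `(2^{nR}, 2^{nR₀}, n)` codes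
with some common-randomness rate `R₀ ≥ 0`. -/
def AchMax {C S H : Type*} [Fintype C] [Fintype S] [Fintype H]
    (PCS : C → S → ℝ) (PS : S → ℝ) (L : C → H → ℝ) (Q : S → H → ℝ)
    (R ε : ℝ) : Prop :=
  ∃ R₀ : ℝ, 0 ≤ R₀ ∧
    ∃ (f : ∀ n : ℕ, (Fin n → S) → Fin (numMsg R₀ n) → Fin (numMsg R n))
      (g : ∀ n : ℕ, Fin (numMsg R n) → Fin (numMsg R₀ n) → (Fin n → H))
      (pw : ∀ n : ℕ, Fin (numMsg R₀ n) → ℝ),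
        (∀ n, IsPMF (pw n)) ∧
        ∃ l : ℝ,
          Tendsto (fun n : ℕ => dmaxCode PCS PS L Q (pw n)
              (fun sn ω => g n (f n sn ω) ω)) atTop (nhds l) ∧ l < ε

/-!
A uniformly random cyclic shift of the coordinates, drawn from the common randomness, turns a
deterministic code into a stochastic one whose distortion at every coordinate equals the average
distortion of the original code; hence `d_avg`-achievable pairs are `d_max`-achievable.

Conversely, the `d_max` of a stochastic code dominates the average over `ω` of the `d_avg` of the
deterministic codes obtained by freezing the common randomness at `ω`, so some frozen code does at
least as well. These values need not converge, but they are bounded (above by the convergent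
`d_max`, below because losses are nonnegative), so they converge along a subsequence of block
lengths `m`. Repeating the `m`-block code `⌊n / m⌋` times and padding with a fixed model gives a
code at every block length `n` whose `d_avg` tends to the same limit when `m ≪ n`; repetition
costs at most one extra message bit per block, i.e. rate `1 / m ≤ δ`, which the closure absorbs.
-/

theorem sum_comp_mul_prod_of_injective {ι κ S : Type*} [Fintype ι] [Fintype κ] [Fintype S]
    {p : S → ℝ} (hp : ∑ s, p s = 1) {T : κ → ι} (hT : Function.Injective T)
    (F : (κ → S) → ℝ) :
    ∑ x : ι → S, F (x ∘ T) * ∏ i, p (x i) = ∑ y : κ → S, F y * ∏ k, p (y k) := by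
  let e : κ ⊕ ↥(Set.range T)ᶜ ≃ ι :=
    ((Equiv.ofInjective T hT).sumCongr (Equiv.refl _)).trans (Equiv.Set.sumCompl _)
  let Φ : (κ → S) × (↥(Set.range T)ᶜ → S) ≃ (ι → S) :=
    (Equiv.sumArrowEquivProdArrow _ _ S).symm.trans (e.arrowCongr (Equiv.refl S))
  have hΦ : ∀ y z, Φ (y, z) ∘ e = Sum.elim y z := fun y z => by
    funext a; cases a <;> simp [Φ]
  have hT_eq : ∀ y z, Φ (y, z) ∘ T = y := fun y z => by
    have : Φ (y, z) ∘ T = Φ (y, z) ∘ e ∘ Sum.inl := rfl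
    rw [this, ← Function.comp_assoc, hΦ, Sum.elim_comp_inl]
  have hprod : ∀ y z, ∏ i, p (Φ (y, z) i) = (∏ k, p (y k)) * ∏ c, p (z c) := fun y z => by
    rw [← e.prod_comp, Fintype.prod_sum_type]
    simp only [← Function.comp_apply (f := Φ (y, z)), hΦ, Sum.elim_inl, Sum.elim_inr]
  have hmass : ∑ z : ↥(Set.range T)ᶜ → S, ∏ c, p (z c) = 1 := by
    rw [← Fintype.prod_sum]; simp [hp]
  rw [← Φ.sum_comp, Fintype.sum_prod_type]
  simp_rw [hT_eq, hprod, ← mul_assoc, ← Finset.mul_sum, hmass, mul_one]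

section InducedRule

variable {S H : Type*} [Fintype S] {PS : S → ℝ}

theorem inducedRule_nonneg (hPS : ∀ s, 0 ≤ PS s) {n : ℕ} (code : (Fin n → S) → Fin n → H)
    (i : Fin n) (s : S) (h : H) : 0 ≤ inducedRule PS code i s h :=
  div_nonneg (Finset.sum_nonneg fun _ _ => by
    split_ifs
    exacts [Finset.prod_nonneg fun _ _ => hPS _, le_rfl]) (hPS s)

theorem inducedRule_eq_of_factorsThrough (hPS : ∑ s, PS s = 1) {m n : ℕ}
    {T : Fin m → Fin n} (hT : Function.Injective T) {code : (Fin n → S) → Fin n → H}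
    {D : (Fin m → S) → Fin m → H} {i : Fin n} {r : Fin m} (hTr : T r = i)
    (hcode : ∀ sn, code sn i = D (sn ∘ T) r) :
    inducedRule PS code i = inducedRule PS D r := by
  funext s h
  have key := sum_comp_mul_prod_of_injective hPS hT
    (fun y => if y r = s ∧ D y r = h then (1 : ℝ) else 0)
  simp only [boole_mul, Function.comp_apply, hTr] at key
  simp only [inducedRule, hcode]
  convert congrArg (· / PS s) key

theorem inducedRule_perm (hPS : ∑ s, PS s = 1) {n : ℕ}
    (σ : Equiv.Perm (Fin n)) (D : (Fin n → S) → Fin n → H) (i : Fin n) :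
    inducedRule PS (fun sn => D (sn ∘ σ.symm) ∘ σ) i = inducedRule PS D (σ i) :=
  inducedRule_eq_of_factorsThrough hPS σ.symm.injective (σ.symm_apply_apply i) fun _ => rfl

theorem inducedRuleStoch_eq_sum {Ω : Type*} [Fintype Ω] (pw : Ω → ℝ) {n : ℕ}
    (code : (Fin n → S) → Ω → Fin n → H) (i : Fin n) :
    inducedRuleStoch PS pw code i
      = fun s h => ∑ ω, pw ω * inducedRule PS (fun sn => code sn ω) i s h := by
  funext s h
  simp only [inducedRuleStoch, inducedRule, Finset.sum_div, Finset.mul_sum, mul_div_assoc',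
    mul_ite, mul_zero]

end InducedRule

section Distortion

variable {C S H : Type*} [Fintype C] [Fintype S] [Fintype H]
  {PCS : C → S → ℝ} {L : C → H → ℝ} {Q : S → H → ℝ}

theorem dsem_sum_mul {ι : Type*} [Fintype ι] {w : ι → ℝ} (hw : ∑ t, w t = 1)
    (Qh : ι → S → H → ℝ) :
    dsem PCS L Q (fun s h => ∑ t, w t * Qh t s h) = ∑ t, w t * dsem PCS L Q (Qh t) := by
  have hloss : ∀ c s, trueLoss L c (fun h => ∑ t, w t * Qh t s h) - trueLoss L c (Q s)
      = ∑ t, w t * (trueLoss L c (Qh t s) - trueLoss L c (Q s)) := fun c s => by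
    have hmix : trueLoss L c (fun h => ∑ t, w t * Qh t s h)
        = ∑ t, w t * trueLoss L c (Qh t s) := by
      simp only [trueLoss, Finset.sum_mul, Finset.mul_sum]
      rw [Finset.sum_comm]
      simp only [mul_assoc]
    rw [hmix]
    simp only [mul_sub, Finset.sum_sub_distrib, ← Finset.sum_mul, hw, one_mul]
  simp only [dsem, hloss, Finset.mul_sum, mul_left_comm (PCS _ _)]
  exact (Finset.sum_congr rfl fun _ _ => Finset.sum_comm).trans Finset.sum_comm

theorem neg_sum_trueLoss_le_dsem (hPCS : ∀ c s, 0 ≤ PCS c s) (hL : ∀ c h, 0 ≤ L c h)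
    {Qh : S → H → ℝ} (hQh : ∀ s h, 0 ≤ Qh s h) :
    -∑ c, ∑ s, PCS c s * trueLoss L c (Q s) ≤ dsem PCS L Q Qh := by
  simp only [dsem, mul_sub, Finset.sum_sub_distrib]
  have : 0 ≤ ∑ c, ∑ s, PCS c s * trueLoss L c (Qh s) :=
    Finset.sum_nonneg fun c _ => Finset.sum_nonneg fun s _ => mul_nonneg (hPCS c s)
      (Finset.sum_nonneg fun h _ => mul_nonneg (hQh s h) (hL c h))
  linarith

end Distortion

theorem exists_le_sum_mul {Ω : Type*} [Fintype Ω] [Nonempty Ω] {w : Ω → ℝ} (hw : IsPMF w)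
    (x : Ω → ℝ) : ∃ ω, x ω ≤ ∑ ω', w ω' * x ω' := by
  obtain ⟨ω₀, hω₀⟩ := Finite.exists_min x
  refine ⟨ω₀, ?_⟩
  calc x ω₀ = ∑ ω', w ω' * x ω₀ := by rw [← Finset.sum_mul, hw.2, one_mul]
    _ ≤ ∑ ω', w ω' * x ω' := Finset.sum_le_sum fun ω' _ =>
      mul_le_mul_of_nonneg_left (hω₀ ω') (hw.1 ω')

theorem one_div_mul_sum_le_iSup {n : ℕ} (x : Fin n → ℝ) : 1 / (n : ℝ) * ∑ i, x i ≤ ⨆ i, x i := by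
  rcases Nat.eq_zero_or_pos n with rfl | hn
  · simp
  · have hsum : ∑ i, x i ≤ n * ⨆ i, x i := by
      simpa using Finset.sum_le_card_nsmul univ x _ fun i _ => le_ciSup (Finite.bddAbove_range x) i
    rw [one_div, inv_mul_le_iff₀ (by exact_mod_cast hn)]
    exact hsum

theorem le_one_div_mul_sum {n : ℕ} (hn : 0 < n) {x : Fin n → ℝ} {a : ℝ} (hx : ∀ i, a ≤ x i) :
    a ≤ 1 / (n : ℝ) * ∑ i, x i := by
  have hsum : n * a ≤ ∑ i, x i := by
    simpa using Finset.card_nsmul_le_sum univ x a fun i _ => hx i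
  rw [one_div, le_inv_mul_iff₀ (by exact_mod_cast hn)]
  exact hsum

section Codes

variable {C S H : Type*} [Fintype C] [Fintype S] [Fintype H]
  {PCS : C → S → ℝ} {PS : S → ℝ} {L : C → H → ℝ} {Q : S → H → ℝ}

theorem dsem_inducedRuleStoch {Ω : Type*} [Fintype Ω] {pw : Ω → ℝ} (hpw : ∑ ω, pw ω = 1)
    {n : ℕ} (code : (Fin n → S) → Ω → Fin n → H) (i : Fin n) :
    dsem PCS L Q (inducedRuleStoch PS pw code i)
      = ∑ ω, pw ω * dsem PCS L Q (inducedRule PS (fun sn => code sn ω) i) := by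
  rw [inducedRuleStoch_eq_sum]
  exact dsem_sum_mul hpw _

theorem le_davgCode (hPCS : ∀ c s, 0 ≤ PCS c s) (hPS : ∀ s, 0 ≤ PS s) (hL : ∀ c h, 0 ≤ L c h)
    {n : ℕ} (hn : 0 < n) (code : (Fin n → S) → Fin n → H) :
    -∑ c, ∑ s, PCS c s * trueLoss L c (Q s) ≤ davgCode PCS PS L Q code :=
  le_one_div_mul_sum hn fun i =>
    neg_sum_trueLoss_le_dsem hPCS hL (inducedRule_nonneg hPS code i)

theorem sum_mul_davgCode {Ω : Type*} [Fintype Ω] {pw : Ω → ℝ} (hpw : ∑ ω, pw ω = 1) {n : ℕ}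
    (code : (Fin n → S) → Ω → Fin n → H) :
    ∑ ω, pw ω * davgCode PCS PS L Q (fun sn => code sn ω)
      = 1 / (n : ℝ) * ∑ i, dsem PCS L Q (inducedRuleStoch PS pw code i) := by
  simp only [davgCode, dsem_inducedRuleStoch hpw, Finset.mul_sum]
  rw [Finset.sum_comm]
  exact Finset.sum_congr rfl fun _ _ => Finset.sum_congr rfl fun _ _ => by ring

theorem exists_davgCode_le_dmaxCode {Ω : Type*} [Fintype Ω] [Nonempty Ω] {pw : Ω → ℝ}
    (hpw : IsPMF pw) {n : ℕ} (code : (Fin n → S) → Ω → Fin n → H) :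
    ∃ ω, davgCode PCS PS L Q (fun sn => code sn ω) ≤ dmaxCode PCS PS L Q pw code := by
  obtain ⟨ω, hω⟩ := exists_le_sum_mul hpw fun ω => davgCode PCS PS L Q (fun sn => code sn ω)
  refine ⟨ω, hω.trans ?_⟩
  rw [sum_mul_davgCode hpw.2]
  exact one_div_mul_sum_le_iSup _

theorem natCast_mul_davgCode {m : ℕ} (D : (Fin m → S) → Fin m → H) :
    (m : ℝ) * davgCode PCS PS L Q D = ∑ r, dsem PCS L Q (inducedRule PS D r) := by
  rcases Nat.eq_zero_or_pos m with rfl | hm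
  · simp
  · rw [davgCode, ← mul_assoc, mul_one_div_cancel (by exact_mod_cast hm.ne'), one_mul]

end Codes

def cyclicShift (n k : ℕ) : Equiv.Perm (Fin n) := finRotate n ^ k

open Fin.NatCast in
theorem sum_range_cyclicShift_apply {n : ℕ} (i : Fin n) (x : Fin n → ℝ) :
    ∑ k ∈ range n, x (cyclicShift n k i) = ∑ t, x t := by
  obtain ⟨n, rfl⟩ := Nat.exists_eq_succ_of_ne_zero i.pos.ne'
  have hshift : ∀ k : ℕ, cyclicShift (n + 1) k i = i + (k : Fin (n + 1)) := by
    intro k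
    induction k with
    | zero => simp [cyclicShift]
    | succ k ih =>
      rw [cyclicShift, pow_succ', Equiv.Perm.mul_apply, ← cyclicShift, ih, finRotate_apply,
        Nat.cast_succ, add_assoc]
  simp only [hshift]
  rw [← Fin.sum_univ_eq_sum_range (fun k => x (i + k))]
  simp only [Fin.cast_val_eq_self]
  exact Equiv.sum_comp (Equiv.addLeft i) x

def uniformPrefix (k N : ℕ) : Fin N → ℝ := fun ω => if (ω : ℕ) < k then (k : ℝ)⁻¹ else 0

theorem sum_uniformPrefix_mul {k N : ℕ} (hkN : k ≤ N) (x : ℕ → ℝ) :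
    ∑ ω, uniformPrefix k N ω * x ω = (k : ℝ)⁻¹ * ∑ j ∈ range k, x j := by
  simp only [uniformPrefix]
  rw [Fin.sum_univ_eq_sum_range (fun j => (if j < k then (k : ℝ)⁻¹ else 0) * x j),
    Finset.mul_sum]
  simp only [ite_mul, zero_mul]
  rw [← Finset.sum_filter]
  congr 1
  ext j
  simp only [Finset.mem_filter, Finset.mem_range]
  omega

theorem isPMF_uniformPrefix {k N : ℕ} (hk : 0 < k) (hkN : k ≤ N) :
    IsPMF (uniformPrefix k N) := by
  refine ⟨fun ω => by unfold uniformPrefix; split_ifs <;> positivity, ?_⟩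
  simpa [hk.ne'] using sum_uniformPrefix_mul hkN fun _ => 1

theorem max_le_numMsg_one (n : ℕ) : max n 1 ≤ numMsg 1 n := by
  have : numMsg 1 n = 2 ^ n := by
    rw [numMsg, mul_one, Real.rpow_natCast]
    exact_mod_cast Nat.ceil_natCast (2 ^ n)
  rw [this]
  exact max_le Nat.lt_two_pow_self.le Nat.one_le_two_pow

section Symmetrization

variable {C S H : Type*} [Fintype C] [Fintype S] [Fintype H]
  {PCS : C → S → ℝ} {PS : S → ℝ} {L : C → H → ℝ} {Q : S → H → ℝ}

theorem dmaxCode_cyclicShift_eq_davgCode (hPS : ∑ s, PS s = 1) {n N : ℕ} (hN : max n 1 ≤ N)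
    (D : (Fin n → S) → Fin n → H) :
    dmaxCode PCS PS L Q (uniformPrefix (max n 1) N)
        (fun sn ω => D (sn ∘ (cyclicShift n ω).symm) ∘ cyclicShift n ω)
      = davgCode PCS PS L Q D := by
  have hcoord (i : Fin n) : dsem PCS L Q (inducedRuleStoch PS (uniformPrefix (max n 1) N)
      (fun sn ω => D (sn ∘ (cyclicShift n ω).symm) ∘ cyclicShift n ω) i)
      = davgCode PCS PS L Q D := by
    rw [dsem_inducedRuleStoch (isPMF_uniformPrefix (lt_max_of_lt_right one_pos) hN).2]
    simp only [inducedRule_perm hPS]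
    rw [sum_uniformPrefix_mul hN fun k => dsem PCS L Q (inducedRule PS D (cyclicShift n k i)),
      max_eq_left i.pos, sum_range_cyclicShift_apply i fun t => dsem PCS L Q (inducedRule PS D t),
      davgCode, one_div]
  rcases Nat.eq_zero_or_pos n with rfl | hn
  · simp [dmaxCode, davgCode]
  · have : Nonempty (Fin n) := ⟨⟨0, hn⟩⟩
    simp only [dmaxCode, hcoord, ciSup_const]

theorem AchAvg.achMax (hPS : ∑ s, PS s = 1) {R ε : ℝ} (h : AchAvg PCS PS L Q R ε) :
    AchMax PCS PS L Q R ε := by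
  obtain ⟨f, g, l, hl, hlε⟩ := h
  refine ⟨1, zero_le_one, fun n sn ω => f n (sn ∘ (cyclicShift n ω).symm),
    fun n msg ω => g n msg ∘ cyclicShift n ω, fun n => uniformPrefix (max n 1) (numMsg 1 n),
    fun n => isPMF_uniformPrefix (lt_max_of_lt_right one_pos) (max_le_numMsg_one n), l, ?_, hlε⟩
  exact hl.congr fun n =>
    (dmaxCode_cyclicShift_eq_davgCode hPS (max_le_numMsg_one n) fun sn => g n (f n sn)).symm

end Symmetrization

theorem numMsg_pos (R : ℝ) (n : ℕ) : 0 < numMsg R n :=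
  Nat.ceil_pos.mpr (Real.rpow_pos_of_pos two_pos _)

theorem numMsg_eq_one_of_nonpos {R : ℝ} (hR : R ≤ 0) (n : ℕ) : numMsg R n = 1 := by
  refine le_antisymm (Nat.ceil_le.mpr ?_) (numMsg_pos R n)
  exact_mod_cast Real.rpow_le_one_of_one_le_of_nonpos one_le_two
    (mul_nonpos_of_nonneg_of_nonpos n.cast_nonneg hR)

theorem numMsg_le_two_rpow {R : ℝ} (hR : 0 ≤ R) (n : ℕ) :
    (numMsg R n : ℝ) ≤ 2 ^ (n * R + 1) := by
  have hone : (1 : ℝ) ≤ 2 ^ ((n : ℝ) * R) := Real.one_le_rpow one_le_two (by positivity)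
  have hceil := Nat.ceil_lt_add_one (Real.rpow_nonneg zero_le_two ((n : ℝ) * R))
  rw [Real.rpow_add_one two_ne_zero]
  exact (le_of_lt hceil).trans (by linarith)

theorem numMsg_pow_le {R δ : ℝ} {b m n : ℕ} (hmδ : 1 ≤ (m : ℝ) * δ) (hbm : b * m ≤ n) :
    numMsg R m ^ b ≤ numMsg (R + δ) n := by
  rcases le_or_gt R 0 with hR | hR
  · rw [numMsg_eq_one_of_nonpos hR, one_pow]
    exact numMsg_pos _ _
  have hδ : 0 < δ := pos_of_mul_pos_right (one_pos.trans_le hmδ) m.cast_nonneg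
  have hbm' : (b : ℝ) * m ≤ n := by exact_mod_cast hbm
  have hexp : ((m : ℝ) * R + 1) * b ≤ n * (R + δ) := by
    nlinarith [mul_le_mul_of_nonneg_left hmδ b.cast_nonneg]
  rw [← Nat.cast_le (α := ℝ)]
  calc ((numMsg R m ^ b : ℕ) : ℝ) = (numMsg R m : ℝ) ^ b := by push_cast; rfl
    _ ≤ ((2 : ℝ) ^ ((m : ℝ) * R + 1)) ^ b :=
      pow_le_pow_left₀ (Nat.cast_nonneg _) (numMsg_le_two_rpow hR.le m) b
    _ = 2 ^ (((m : ℝ) * R + 1) * b) := by rw [← Real.rpow_natCast, ← Real.rpow_mul zero_le_two]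
    _ ≤ 2 ^ ((n : ℝ) * (R + δ)) := Real.rpow_le_rpow_of_exponent_le one_le_two hexp
    _ ≤ numMsg (R + δ) n := Nat.le_ceil _

theorem exists_fin_factorization {A M B : Type*} [Fintype M] [Nonempty M] {N : ℕ}
    (hN : Fintype.card M ≤ N) (Ψ : A → M) (Φ : M → B) :
    ∃ (F : A → Fin N) (G : Fin N → B), ∀ a, G (F a) = Φ (Ψ a) := by
  obtain ⟨ι⟩ := Function.Embedding.nonempty_of_card_le (by simpa using hN :
    Fintype.card M ≤ Fintype.card (Fin N))
  exact ⟨ι ∘ Ψ, Φ ∘ Function.invFun ι, fun a => by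
    simp only [Function.comp_apply, Function.leftInverse_invFun ι.injective (Ψ a)]⟩

def blockEmb {b m n : ℕ} (hbm : b * m ≤ n) (j : Fin b) : Fin m → Fin n :=
  fun r => Fin.castLE hbm (finProdFinEquiv (j, r))

theorem blockEmb_injective {b m n : ℕ} (hbm : b * m ≤ n) (j : Fin b) :
    Function.Injective (blockEmb hbm j) :=
  (Fin.castLE_injective hbm).comp (finProdFinEquiv.injective.comp (Prod.mk_right_injective j))

/-- Apply the blocklength-`m` code `D` to each of `b` consecutive blocks and output `h₀` on the
remaining `n - b * m` coordinates. -/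
def tileCode {S H : Type*} (h₀ : H) {b m n : ℕ} (hbm : b * m ≤ n)
    (D : (Fin m → S) → Fin m → H) : (Fin n → S) → Fin n → H := fun sn i =>
  if hi : (i : ℕ) < b * m then
    D (sn ∘ blockEmb hbm (finProdFinEquiv.symm ⟨i, hi⟩).1) (finProdFinEquiv.symm ⟨i, hi⟩).2
  else h₀

/-- The rule of a coordinate on which the code always outputs `h₀`, written as the rule induced by
the constant code of blocklength one. -/
def constRule {S H : Type*} [Fintype S] (PS : S → ℝ) (h₀ : H) : S → H → ℝ :=
  inducedRule PS (fun (_ : Fin 1 → S) (_ : Fin 1) => h₀) 0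

section Tiling

variable {S H : Type*} [Fintype S] {PS : S → ℝ} (h₀ : H) {b m n : ℕ} (hbm : b * m ≤ n)
  (D : (Fin m → S) → Fin m → H)

theorem inducedRule_tileCode_of_lt (hPS : ∑ s, PS s = 1) {i : Fin n} (hi : (i : ℕ) < b * m) :
    inducedRule PS (tileCode h₀ hbm D) i
      = inducedRule PS D (finProdFinEquiv.symm ⟨i, hi⟩).2 :=
  inducedRule_eq_of_factorsThrough hPS (blockEmb_injective hbm _)
    (by simp only [blockEmb, Prod.mk.eta, Equiv.apply_symm_apply, Fin.castLE_mk])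
    fun _ => dif_pos hi

theorem inducedRule_tileCode_of_not_lt (hPS : ∑ s, PS s = 1) {i : Fin n}
    (hi : ¬ (i : ℕ) < b * m) :
    inducedRule PS (tileCode h₀ hbm D) i = constRule PS h₀ :=
  inducedRule_eq_of_factorsThrough hPS (T := fun _ => i)
    (Function.injective_of_subsingleton _) rfl fun _ => dif_neg hi

end Tiling

section TiledCodes

variable {C S H : Type*} [Fintype C] [Fintype S] [Fintype H]
  {PCS : C → S → ℝ} {PS : S → ℝ} {L : C → H → ℝ} {Q : S → H → ℝ}

theorem davgCode_tileCode (hPS : ∑ s, PS s = 1) (h₀ : H) {b m n : ℕ} (hn : 0 < n)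
    (hbm : b * m ≤ n) (D : (Fin m → S) → Fin m → H) :
    davgCode PCS PS L Q (tileCode h₀ hbm D)
      = ((b * m : ℕ) / n : ℝ) * davgCode PCS PS L Q D
        + (1 - (b * m : ℕ) / n : ℝ) * dsem PCS L Q (constRule PS h₀) := by
  obtain ⟨k, rfl⟩ := Nat.exists_eq_add_of_le hbm
  have hblocks : ∑ i : Fin (b * m), dsem PCS L Q (inducedRule PS (tileCode h₀ hbm D)
      (Fin.castAdd k i)) = b * (m * davgCode PCS PS L Q D) := by
    calc _ = ∑ i : Fin (b * m), dsem PCS L Q (inducedRule PS D (finProdFinEquiv.symm i).2) :=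
          Finset.sum_congr rfl fun i _ => by rw [inducedRule_tileCode_of_lt h₀ hbm D hPS i.2]; rfl
      _ = ∑ p : Fin b × Fin m, dsem PCS L Q (inducedRule PS D p.2) :=
          finProdFinEquiv.symm.sum_comp fun p => dsem PCS L Q (inducedRule PS D p.2)
      _ = b * (m * davgCode PCS PS L Q D) := by
          simp [Fintype.sum_prod_type, natCast_mul_davgCode]
  have hpad : ∑ i : Fin k, dsem PCS L Q (inducedRule PS (tileCode h₀ hbm D)
      (Fin.natAdd (b * m) i)) = k * dsem PCS L Q (constRule PS h₀) := by
    simp [inducedRule_tileCode_of_not_lt h₀ hbm D hPS]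
  rw [davgCode, Fin.sum_univ_add, hblocks, hpad]
  have : (0 : ℝ) < b * m + k := by exact_mod_cast hn
  push_cast
  field_simp
  ring

end TiledCodes

theorem exists_code_eq_tileCode {S H : Type*} (h₀ : H) {R δ : ℝ} {b m n : ℕ}
    (hmδ : 1 ≤ (m : ℝ) * δ) (hbm : b * m ≤ n) (enc : (Fin m → S) → Fin (numMsg R m))
    (dec : Fin (numMsg R m) → Fin m → H) :
    ∃ (F : (Fin n → S) → Fin (numMsg (R + δ) n)) (G : Fin (numMsg (R + δ) n) → Fin n → H),
      ∀ sn, G (F sn) = tileCode h₀ hbm (fun u => dec (enc u)) sn := by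
  have : Nonempty (Fin (numMsg R m)) := ⟨⟨0, numMsg_pos R m⟩⟩
  exact exists_fin_factorization (by simpa using numMsg_pow_le hmδ hbm)
    (fun sn j => enc (sn ∘ blockEmb hbm j))
    (fun v (i : Fin n) => if hi : (i : ℕ) < b * m then
      dec (v (finProdFinEquiv.symm ⟨i, hi⟩).1) (finProdFinEquiv.symm ⟨i, hi⟩).2 else h₀)

theorem exists_tendsto_comp_of_subseq {X : Type*} {x : ℕ → X} {l : Filter X} {φ : ℕ → ℕ}
    (hφ : StrictMono φ) (hx : Tendsto (x ∘ φ) atTop l) :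
    ∃ m : ℕ → ℕ, Tendsto (x ∘ m) atTop l ∧ Tendsto m atTop atTop ∧
      Tendsto (fun n => (m n : ℝ) / n) atTop (𝓝 0) := by
  let k : ℕ → ℕ := fun n => Nat.findGreatest (fun k => φ k * φ k ≤ n) n
  have hk : Tendsto k atTop atTop := tendsto_atTop.2 fun K => eventually_atTop.2
    ⟨φ K * φ K, fun n hn =>
      Nat.le_findGreatest ((hφ.le_apply.trans (Nat.le_mul_self _)).trans hn) hn⟩
  have hsq : ∀ᶠ n in atTop, φ (k n) * φ (k n) ≤ n :=
    eventually_atTop.2 ⟨φ 0 * φ 0, fun n hn =>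
      Nat.findGreatest_spec (P := fun k => φ k * φ k ≤ n) (Nat.zero_le n) hn⟩
  have hm : Tendsto (φ ∘ k) atTop atTop := hφ.tendsto_atTop.comp hk
  refine ⟨φ ∘ k, hx.comp hk, hm, ?_⟩
  refine tendsto_of_tendsto_of_tendsto_of_le_of_le' tendsto_const_nhds
    (tendsto_natCast_atTop_atTop.comp hm).inv_tendsto_atTop
    (Eventually.of_forall fun n => by positivity) ?_
  filter_upwards [hsq, hm.eventually_gt_atTop 0] with n hsq hpos
  have hpos' : (0 : ℝ) < φ (k n) := by exact_mod_cast hpos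
  have hsq' : (φ (k n) : ℝ) * φ (k n) ≤ n := by exact_mod_cast hsq
  change (φ (k n) : ℝ) / n ≤ (φ (k n) : ℝ)⁻¹
  rw [div_le_iff₀ (by nlinarith), ← div_eq_inv_mul, le_div_iff₀ hpos']
  exact hsq'

theorem tendsto_natDiv_mul_div_self {m : ℕ → ℕ} (hm : ∀ᶠ n in atTop, 0 < m n)
    (hmn : Tendsto (fun n => (m n : ℝ) / n) atTop (𝓝 0)) :
    Tendsto (fun n => ((n / m n * m n : ℕ) : ℝ) / n) atTop (𝓝 1) := by
  have hlow : Tendsto (fun n => 1 - (m n : ℝ) / n) atTop (𝓝 1) := by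
    simpa using tendsto_const_nhds.sub hmn
  refine tendsto_of_tendsto_of_tendsto_of_le_of_le' hlow tendsto_const_nhds ?_ ?_
  · filter_upwards [hm, eventually_gt_atTop 0] with n hm hn
    have hlt : (n : ℝ) < (n / m n * m n : ℕ) + m n := by exact_mod_cast Nat.lt_div_mul_add hm
    have hn' : (0 : ℝ) < n := by exact_mod_cast hn
    rw [sub_le_iff_le_add, ← add_div, le_div_iff₀ hn', one_mul]
    exact hlt.le
  · filter_upwards [eventually_gt_atTop 0] with n hn
    exact div_le_one_of_le₀ (by exact_mod_cast Nat.div_mul_le_self n (m n)) n.cast_nonneg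

section Achievability

variable {C S H : Type*} [Fintype C] [Fintype S] [Fintype H]
  {PCS : C → S → ℝ} {PS : S → ℝ} {L : C → H → ℝ} {Q : S → H → ℝ}

theorem achAvg_add_of_tendsto_subseq [Nonempty H] (hPS : ∑ s, PS s = 1) {R δ ε l : ℝ}
    (hδ : 0 < δ) (enc : ∀ m, (Fin m → S) → Fin (numMsg R m))
    (dec : ∀ m, Fin (numMsg R m) → Fin m → H) {φ : ℕ → ℕ} (hφ : StrictMono φ)
    (hl : Tendsto (fun k => davgCode PCS PS L Q (fun u => dec (φ k) (enc (φ k) u))) atTop (𝓝 l))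
    (hlε : l < ε) : AchAvg PCS PS L Q (R + δ) ε := by
  obtain ⟨m, hlm, hm, hmn⟩ := exists_tendsto_comp_of_subseq
    (x := fun m => davgCode PCS PS L Q (fun u => dec m (enc m u))) hφ hl
  let h₀ : H := Classical.arbitrary H
  let d₀ := dsem PCS L Q (constRule PS h₀)
  have hcodes : ∀ n, ∃ (F : (Fin n → S) → Fin (numMsg (R + δ) n))
      (G : Fin (numMsg (R + δ) n) → Fin n → H), 1 ≤ (m n : ℝ) * δ → ∀ sn, G (F sn) =
        tileCode h₀ (Nat.div_mul_le_self n (m n)) (fun u => dec (m n) (enc (m n) u)) sn := by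
    intro n
    by_cases hmδ : 1 ≤ (m n : ℝ) * δ
    · obtain ⟨F, G, hFG⟩ := exists_code_eq_tileCode h₀ hmδ (Nat.div_mul_le_self n (m n))
        (enc (m n)) (dec (m n))
      exact ⟨F, G, fun _ => hFG⟩
    · exact ⟨fun _ => ⟨0, numMsg_pos _ _⟩, fun _ _ => h₀, fun h => absurd h hmδ⟩
  choose F G hFG using hcodes
  have hθ := tendsto_natDiv_mul_div_self (hm.eventually_gt_atTop 0) hmn
  have hlim : Tendsto (fun n => ((n / m n * m n : ℕ) / n : ℝ) *
      davgCode PCS PS L Q (fun u => dec (m n) (enc (m n) u))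
        + (1 - (n / m n * m n : ℕ) / n : ℝ) * d₀) atTop (𝓝 l) := by
    simpa using (hθ.mul hlm).add (((tendsto_const_nhds (x := (1 : ℝ))).sub hθ).mul
      (tendsto_const_nhds (x := d₀)))
  refine ⟨F, G, l, hlim.congr' ?_, hlε⟩
  filter_upwards [(tendsto_natCast_atTop_atTop.comp hm).eventually_ge_atTop (1 / δ),
    eventually_gt_atTop 0] with n hmδ hn
  rw [Function.comp_apply, div_le_iff₀ hδ] at hmδ
  rw [funext (hFG n hmδ), davgCode_tileCode hPS h₀ hn]

theorem AchMax.achAvg_add [Nonempty H] (hPCS : ∀ c s, 0 ≤ PCS c s) (hPS₀ : ∀ s, 0 ≤ PS s)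
    (hPS : ∑ s, PS s = 1) (hL : ∀ c h, 0 ≤ L c h) {R ε δ : ℝ} (hδ : 0 < δ)
    (h : AchMax PCS PS L Q R ε) : AchAvg PCS PS L Q (R + δ) ε := by
  obtain ⟨R₀, -, f, g, pw, hpw, l, hl, hlε⟩ := h
  have (n : ℕ) : Nonempty (Fin (numMsg R₀ n)) := ⟨⟨0, numMsg_pos R₀ n⟩⟩
  choose ω hω using fun n => exists_davgCode_le_dmaxCode (PCS := PCS) (PS := PS) (L := L)
    (Q := Q) (hpw n) fun sn ω => g n (f n sn ω) ω
  obtain ⟨B, hB⟩ := hl.bddAbove_range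
  have hbdd : ∀ᶠ n in atTop, davgCode PCS PS L Q (fun sn => g n (f n sn (ω n)) (ω n))
      ∈ Set.Icc (-∑ c, ∑ s, PCS c s * trueLoss L c (Q s)) B :=
    (eventually_gt_atTop 0).mono fun n hn =>
      ⟨le_davgCode hPCS hPS₀ hL hn _, (hω n).trans (hB (Set.mem_range_self n))⟩
  obtain ⟨l', -, φ, hφ, hφl'⟩ :=
    tendsto_subseq_of_frequently_bounded (Metric.isBounded_Icc _ _) hbdd.frequently
  have hl'l : l' ≤ l := le_of_tendsto_of_tendsto' hφl' (hl.comp hφ.tendsto_atTop) fun k => hω (φ k)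
  exact achAvg_add_of_tendsto_subseq hPS hδ (fun n u => f n u (ω n)) (fun n msg => g n msg (ω n))
    hφ hφl' (hl'l.trans_lt hlε)

end Achievability

theorem dmax_region_eq_davg_region_general
    {C S H : Type*} [Fintype C] [Fintype S] [Fintype H]
    [Nonempty H]
    (PC : C → ℝ) (hPC : IsPMF PC)
    (PSC : C → S → ℝ) (hPSC : ∀ c, IsPMF (PSC c))
    (PCS : C → S → ℝ) (hPCS : PCS = fun c s => PC c * PSC c s)
    (PS : S → ℝ) (hPS : PS = fun s => ∑ c, PCS c s)
    (L : C → H → ℝ) (hL : ∀ c h, L c h ∈ Set.Icc (0 : ℝ) 1)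
    (Q : S → H → ℝ) (R ε : ℝ) :
    (R, ε) ∈ closure {p : ℝ × ℝ | AchMax PCS PS L Q p.1 p.2} ↔
      (R, ε) ∈ closure {p : ℝ × ℝ | AchAvg PCS PS L Q p.1 p.2} := by
  have hPCS₀ : ∀ c s, 0 ≤ PCS c s := fun c s => hPCS ▸ mul_nonneg (hPC.1 c) ((hPSC c).1 s)
  have hPS₀ : ∀ s, 0 ≤ PS s := fun s => hPS ▸ Finset.sum_nonneg fun c _ => hPCS₀ c s
  have hPS₁ : ∑ s, PS s = 1 := by
    simp only [hPS, hPCS]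
    rw [Finset.sum_comm]
    simp [← Finset.mul_sum, (hPSC _).2, hPC.2]
  constructor
  · refine fun hmem => closure_minimal (fun p hp => ?_) isClosed_closure hmem
    have hlim : Tendsto (fun δ : ℝ => (p.1 + δ, p.2)) (𝓝[>] 0) (𝓝 p) := by
      simpa using ((continuous_const_add p.1).prodMk continuous_const).tendsto 0 |>.mono_left
        nhdsWithin_le_nhds
    exact mem_closure_of_tendsto hlim (eventually_nhdsWithin_of_forall fun δ hδ =>
      AchMax.achAvg_add hPCS₀ hPS₀ hPS₁ (fun c h => (hL c h).1) hδ hp)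
  · exact fun hmem => closure_mono (fun p hp => AchAvg.achMax (PCS := PCS) (L := L) hPS₁ hp) hmem

/-- **Achievability for `d_max`** (Lemma 1): with sufficient common randomness,
the rate–distortion region for `d_max` coincides with the one for `d_avg`. -/
theorem dmax_region_eq_davg_region
    {C S H : Type*} [Fintype C] [Fintype S] [Fintype H]
    [Nonempty C] [Nonempty S] [Nonempty H]
    (PC : C → ℝ) (hPC : IsPMF PC)
    (PSC : C → S → ℝ) (hPSC : ∀ c, IsPMF (PSC c))
    (PCS : C → S → ℝ) (hPCS : PCS = fun c s => PC c * PSC c s)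
    (PS : S → ℝ) (hPS : PS = fun s => ∑ c, PCS c s)
    (L : C → H → ℝ) (hL : ∀ c h, L c h ∈ Set.Icc (0 : ℝ) 1)
    (Q : S → H → ℝ) (hQ : IsRule Q) (R ε : ℝ) :
    (R, ε) ∈ closure {p : ℝ × ℝ | AchMax PCS PS L Q p.1 p.2} ↔
      (R, ε) ∈ closure {p : ℝ × ℝ | AchAvg PCS PS L Q p.1 p.2} :=
  dmax_region_eq_davg_region_general PC hPC PSC hPSC PCS hPCS PS hPS L hL Q R ε
end
end

section
/- Distortion-rate bound for scheme 1 (Lemma 2, Eq. (9)): Assume the loss satisfies 0 ≤ L_c(h) ≤ L_max for all c∈𝒞, h∈ℋ. Let P_H be a full-support pmf on ℋ, let 𝒬 be a convex set of learning rules containing Q, and let Q̂ ∈ 𝒬 minimize the expected divergence 𝓡(Q') = E_{C,S}[D_KL(Q'(·|S) ‖ P_H)] over 𝒬 (divergences in nats). Set Δ_R = 𝓡(Q) − 𝓡(Q̂) ≥ 0. Then the semantic distortion satisfies d_sem(Q, Q̂) ≤ L_max · min{ √(Δ_R/2), √(1 − e^{−Δ_R}) }. -/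
open Finset Filter Topology Classical

noncomputable section

/-- Kullback–Leibler divergence in nats between pmfs on a finite type
(with the convention `0 · ln 0 = 0`). -/
def klNats {α : Type*} [Fintype α] (q p : α → ℝ) : ℝ :=
  ∑ x, q x * Real.log (q x / p x)

/-- Expected divergence `𝓡(Q') = E_{C,S}[D_KL(Q'(·|S) ‖ P_H)]` of a learning
rule `Q'` with respect to the pre-data coding distribution `P_H`. -/
def rateOf {C S H : Type*} [Fintype C] [Fintype S] [Fintype H]
    (PCS : C → S → ℝ) (PH : H → ℝ) (Q' : S → H → ℝ) : ℝ :=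
  ∑ c, ∑ s, PCS c s * klNats (Q' s) PH

/-!
Mix `Q` into the minimiser: `Q_u = (1 - u) Q + u Q̂` stays in the convex set, and the
compensation identity for Kullback–Leibler divergences together with the minimality of `Q̂`
gives `E[D(Q ‖ Q_u)] ≤ Δ_R`. (Mixing is needed because `D(Q ‖ Q̂)` itself is junk,
`log 0 = 0`, where `Q̂` vanishes and `Q` does not.) Pinsker's and the Bretagnolle–Huber
inequalities bound `TV(Q, Q_u)² = u² TV(Q, Q̂)²` by the concave increasing function
`min (k / 2) (1 - e^{-k})` of `k = D(Q ‖ Q_u)`, so by Jensen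
`u · E[TV(Q, Q̂)] ≤ √(min (Δ_R / 2) (1 - e^{-Δ_R}))`, and we let `u → 1`. Finally, a loss with
values in `[0, L_max]` changes by at most `L_max · TV` between two beliefs.
-/

open Real InformationTheory Set

lemma IsPMF.nonempty {α : Type*} [Fintype α] {p : α → ℝ} (hp : IsPMF p) : Nonempty α := by
  by_contra h
  have := not_nonempty_iff.1 h
  simpa using hp.2

def tvDist {α : Type*} [Fintype α] (p q : α → ℝ) : ℝ :=
  (∑ a, |p a - q a|) / 2

def pinskerBHBound (k : ℝ) : ℝ :=
  min (k / 2) (1 - exp (-k))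

lemma concaveOn_pinskerBHBound : ConcaveOn ℝ univ pinskerBHBound := by
  have hexp : ConcaveOn ℝ univ fun k : ℝ => -exp (-k) :=
    (convexOn_exp.comp_linearMap (-LinearMap.id)).neg
  have hlin : ConcaveOn ℝ univ fun k : ℝ => k / 2 := by
    refine ⟨convex_univ, fun x _ y _ a b _ _ _ => le_of_eq ?_⟩
    simp only [smul_eq_mul]
    ring
  exact hlin.inf ((concaveOn_const 1 convex_univ).add hexp)

lemma monotone_pinskerBHBound : Monotone pinskerBHBound := fun x y hxy =>
  min_le_min (by linarith) (by gcongr)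

lemma le_of_forall_mem_Ioo_mul_le {x y : ℝ} (h : ∀ u ∈ Ioo (0 : ℝ) 1, u * x ≤ y) :
    x ≤ y := by
  have hlim : Tendsto (fun u => u * x) (𝓝[<] 1) (𝓝 x) := by
    simpa using ((continuous_mul_const x).tendsto 1).mono_left nhdsWithin_le_nhds
  refine le_of_tendsto hlim ?_
  filter_upwards [Ioo_mem_nhdsLT zero_lt_one] with u hu using h u hu

/-- At `x = b / v`, scaled by `v` and combined through Cauchy–Schwarz with the weights
`(2b + 4v) / 3` (of total mass 2), this gives Pinsker's inequality with its sharp constant. -/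
lemma three_mul_sub_one_sq_div_le_klFun {x : ℝ} (hx : 0 ≤ x) :
    3 * (x - 1) ^ 2 / (2 * x + 4) ≤ klFun x := by
  set f : ℝ → ℝ := fun y => klFun y - 3 * (y - 1) ^ 2 / (2 * y + 4)
  set f' : ℝ → ℝ := fun y => log y - 3 * (y - 1) * (y + 5) / (2 * (y + 2) ^ 2)
  set f'' : ℝ → ℝ := fun y => (y - 1) ^ 2 * (y + 8) / (y * (y + 2) ^ 3)
  have hf : ∀ y, 0 < y → HasDerivAt f (f' y) y := fun y hy => by
    refine ((hasDerivAt_klFun hy.ne').sub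
      (((((hasDerivAt_id' y).sub_const 1).pow 2).const_mul 3).div
        (((hasDerivAt_id' y).const_mul 2).add_const 4) (by positivity))).congr_deriv ?_
    simp only [f', Pi.pow_apply]
    field_simp
    ring
  have hf' : ∀ y, 0 < y → HasDerivAt f' (f'' y) y := fun y hy => by
    refine ((hasDerivAt_log hy.ne').sub
      (((((hasDerivAt_id' y).sub_const 1).const_mul 3).mul ((hasDerivAt_id' y).add_const 5)).div
        ((((hasDerivAt_id' y).add_const 2).pow 2).const_mul 2)
        (by simp only [Pi.pow_apply]; positivity))).congr_deriv ?_
    simp only [f'', Pi.pow_apply, Pi.mul_apply]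
    field_simp
    ring
  have hconv : ConvexOn ℝ (Ici 0) f := by
    refine convexOn_of_hasDerivWithinAt2_nonneg (f' := f') (f'' := f'') (convex_Ici 0) ?_ ?_ ?_ ?_
    · exact continuous_klFun.continuousOn.sub
        (ContinuousOn.div (by fun_prop) (by fun_prop) fun y hy => by simp at hy; linarith)
    all_goals simp only [interior_Ici]
    · exact fun y hy => (hf y hy).hasDerivWithinAt
    · exact fun y hy => (hf' y hy).hasDerivWithinAt
    · intro y (hy : 0 < y)
      positivity
  have hmin : IsMinOn f (Ici 0) 1 := by
    refine hconv.isMinOn_of_rightDeriv_eq_zero (by simp) ?_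
    rw [(hf 1 one_pos).hasDerivWithinAt.derivWithin (uniqueDiffWithinAt_Ioi 1)]
    simp [f']
  have := hmin hx
  simp only [f, klFun_one] at this
  norm_num at this
  linarith

lemma mul_klFun_div {a v : ℝ} (hv : v ≠ 0) : v * klFun (a / v) = a * log (a / v) + v - a := by
  rw [klFun_apply]
  field_simp

lemma mul_log_div_eq_add {x y z : ℝ} (hz : z ≠ 0) (hy : y = 0 → x = 0) :
    x * log (x / z) = x * log (x / y) + x * log (y / z) := by
  rcases eq_or_ne x 0 with rfl | hx
  · simp
  have hy' : y ≠ 0 := fun h => hx (hy h)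
  rw [← mul_add, ← log_mul (div_ne_zero hx hy') (div_ne_zero hy' hz), div_mul_div_cancel₀ hy']

lemma eq_zero_and_eq_zero_of_mul_add_mul_eq_zero {s t a b : ℝ} (hs : 0 < s) (ht : 0 < t)
    (ha : 0 ≤ a) (hb : 0 ≤ b) (h : s * a + t * b = 0) : a = 0 ∧ b = 0 := by
  obtain ⟨h₁, h₂⟩ :=
    (add_eq_zero_iff_of_nonneg (mul_nonneg hs.le ha) (mul_nonneg ht.le hb)).1 h
  exact ⟨(mul_eq_zero.1 h₁).resolve_left hs.ne', (mul_eq_zero.1 h₂).resolve_left ht.ne'⟩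

section Divergences

variable {α : Type*} [Fintype α]

lemma klNats_nonneg {a v : α → ℝ} (ha : IsPMF a) (hv : IsPMF v)
    (hsupp : ∀ x, v x = 0 → a x = 0) : 0 ≤ klNats a v := by
  have hpt : ∀ x, a x - v x ≤ a x * log (a x / v x) := fun x => by
    rcases (hv.1 x).eq_or_lt with hv0 | hv0
    · simp [hsupp x hv0.symm, ← hv0]
    · have := mul_nonneg hv0.le (klFun_nonneg (div_nonneg (ha.1 x) hv0.le))
      rw [mul_klFun_div hv0.ne'] at this
      linarith
  calc 0 = ∑ x, (a x - v x) := by rw [Finset.sum_sub_distrib, ha.2, hv.2, sub_self]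
    _ ≤ klNats a v := Finset.sum_le_sum fun x _ => hpt x

/-- The compensation identity for Kullback–Leibler divergences. -/
lemma klNats_smul_add_smul {a b p : α → ℝ} (ha : ∀ x, 0 ≤ a x) (hb : ∀ x, 0 ≤ b x)
    (hp : ∀ x, 0 < p x) {s t : ℝ} (hs : 0 < s) (ht : 0 < t) :
    s * klNats a p + t * klNats b p = klNats (s • a + t • b) p
      + s * klNats a (s • a + t • b) + t * klNats b (s • a + t • b) := by
  simp only [klNats, Finset.mul_sum, ← Finset.sum_add_distrib]
  refine Finset.sum_congr rfl fun x _ => ?_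
  simp only [Pi.add_apply, Pi.smul_apply, smul_eq_mul]
  have hzero := eq_zero_and_eq_zero_of_mul_add_mul_eq_zero hs ht (ha x) (hb x)
  rw [mul_log_div_eq_add (hp x).ne' fun h => (hzero h).1,
    mul_log_div_eq_add (hp x).ne' fun h => (hzero h).2]
  ring

lemma tvDist_smul_add_smul {a b : α → ℝ} {u : ℝ} (hu : 0 ≤ u) :
    tvDist a ((1 - u) • a + u • b) = u * tvDist a b := by
  simp only [tvDist, Finset.mul_sum, mul_div_assoc']
  congr 1
  refine Finset.sum_congr rfl fun x _ => ?_
  rw [← abs_of_nonneg hu, ← abs_mul, abs_of_nonneg hu]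
  congr 1
  simp only [Pi.add_apply, Pi.smul_apply, smul_eq_mul]
  ring

lemma sum_mul_sub_sum_mul_le_mul_tvDist {a b L : α → ℝ} {M : ℝ} (ha : IsPMF a) (hb : IsPMF b)
    (hL : ∀ x, 0 ≤ L x ∧ L x ≤ M) :
    ∑ x, b x * L x - ∑ x, a x * L x ≤ M * tvDist a b := by
  have hpt : ∀ x, (b x - a x) * (L x - M / 2) ≤ M / 2 * |a x - b x| := fun x => by
    rw [abs_sub_comm]
    calc (b x - a x) * (L x - M / 2) ≤ |b x - a x| * |L x - M / 2| :=
          (le_abs_self _).trans (abs_mul _ _).le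
      _ ≤ |b x - a x| * (M / 2) := by
          gcongr
          exact abs_le.2 ⟨by linarith [hL x], by linarith [hL x]⟩
      _ = M / 2 * |b x - a x| := mul_comm _ _
  calc ∑ x, b x * L x - ∑ x, a x * L x = ∑ x, (b x - a x) * (L x - M / 2) := by
        simp only [sub_mul, mul_sub, Finset.sum_sub_distrib, ← Finset.sum_mul, ha.2, hb.2]
        ring
    _ ≤ ∑ x, M / 2 * |a x - b x| := Finset.sum_le_sum fun x _ => hpt x
    _ = M * tvDist a b := by rw [← Finset.mul_sum, tvDist]; ring

end Divergences

section Pinsker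

variable {α : Type*} [Fintype α]

lemma three_mul_sub_sq_div_le_mul_log_div {b v : ℝ} (hb : 0 ≤ b) (hv : 0 ≤ v)
    (hsupp : v = 0 → b = 0) : 3 * (b - v) ^ 2 / (2 * b + 4 * v) ≤ b * log (b / v) - b + v := by
  rcases hv.eq_or_lt with rfl | hv0
  · simp [hsupp rfl]
  have :=
    mul_le_mul_of_nonneg_left (three_mul_sub_one_sq_div_le_klFun (div_nonneg hb hv0.le)) hv0.le
  rw [mul_klFun_div hv0.ne'] at this
  calc 3 * (b - v) ^ 2 / (2 * b + 4 * v) = v * (3 * (b / v - 1) ^ 2 / (2 * (b / v) + 4)) := by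
        field_simp
    _ ≤ _ := this
    _ = _ := by ring

lemma tvDist_sq_le_klNats_div_two {b v : α → ℝ} (hb : IsPMF b) (hv : IsPMF v)
    (hsupp : ∀ x, v x = 0 → b x = 0) : tvDist b v ^ 2 ≤ klNats b v / 2 := by
  have hden : ∀ x, 0 ≤ 2 * b x + 4 * v x := fun x => by linarith [hb.1 x, hv.1 x]
  have hcs : (∑ x, |b x - v x|) ^ 2 ≤
      (∑ x, 3 * (b x - v x) ^ 2 / (2 * b x + 4 * v x)) * ∑ x, (2 * b x + 4 * v x) / 3 := by
    refine Finset.sum_sq_le_sum_mul_sum_of_sq_le_mul _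
      (fun x _ => div_nonneg (by positivity) (hden x))
      (fun x _ => div_nonneg (hden x) (by norm_num)) fun x _ => ?_
    rcases (hden x).eq_or_lt with h0 | h0
    · have hb0 : b x = 0 := by linarith [hb.1 x, hv.1 x]
      have hv0 : v x = 0 := by linarith [hb.1 x, hv.1 x]
      simp [hb0, hv0]
    · rw [sq_abs, div_mul_div_comm, mul_comm 3, mul_assoc, mul_comm 3,
        mul_div_cancel_right₀ _ (mul_pos h0 three_pos).ne']
  have hmass : ∑ x, (2 * b x + 4 * v x) / 3 = 2 := by
    rw [← Finset.sum_div, Finset.sum_add_distrib, ← Finset.mul_sum, ← Finset.mul_sum, hb.2,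
      hv.2]
    norm_num
  have hpt : ∑ x, 3 * (b x - v x) ^ 2 / (2 * b x + 4 * v x) ≤ klNats b v :=
    calc _ ≤ ∑ x, (b x * log (b x / v x) - b x + v x) := Finset.sum_le_sum fun x _ =>
          three_mul_sub_sq_div_le_mul_log_div (hb.1 x) (hv.1 x) (hsupp x)
      _ = klNats b v := by
          rw [Finset.sum_add_distrib, Finset.sum_sub_distrib, hb.2, hv.2, klNats]
          ring
  rw [hmass] at hcs
  rw [tvDist, div_pow]
  linarith

lemma exp_neg_klNats_le_sq_sum_sqrt_mul {b v : α → ℝ} (hb : IsPMF b) (hv : ∀ x, 0 ≤ v x)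
    (hsupp : ∀ x, v x = 0 → b x = 0) : exp (-klNats b v) ≤ (∑ x, √(b x * v x)) ^ 2 := by
  have hjensen := convexOn_exp.map_sum_le (t := Finset.univ) (w := b)
    (p := fun x => log (v x / b x) / 2) (fun x _ => hb.1 x) hb.2 (fun x _ => mem_univ _)
  have hexponent : ∑ x, b x • (log (v x / b x) / 2) = -klNats b v / 2 := by
    have hpt : ∀ x, b x • (log (v x / b x) / 2) = -(b x * log (b x / v x)) / 2 := fun x => by
      rw [smul_eq_mul, ← inv_div (b x), log_inv]
      ring
    rw [Finset.sum_congr rfl fun x _ => hpt x, ← Finset.sum_div, Finset.sum_neg_distrib, klNats]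
  have hterm : ∀ x, b x • exp (log (v x / b x) / 2) = √(b x * v x) := fun x => by
    rcases (hb.1 x).eq_or_lt with h0 | h0
    · simp [← h0]
    have hv0 : 0 < v x := (hv x).lt_of_ne fun h => h0.ne' (hsupp x h.symm)
    rw [smul_eq_mul, exp_half, exp_log (div_pos hv0 h0),
      show b x * v x = b x ^ 2 * (v x / b x) by field_simp, sqrt_mul (sq_nonneg _), sqrt_sq h0.le]
  rw [hexponent, Finset.sum_congr rfl fun x _ => hterm x] at hjensen
  calc exp (-klNats b v) = exp (-klNats b v / 2) ^ 2 := by rw [sq, ← exp_add, add_halves]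
    _ ≤ _ := pow_le_pow_left₀ (exp_nonneg _) hjensen 2

lemma sq_sum_sqrt_mul_le_one_sub_tvDist_sq {b v : α → ℝ} (hb : IsPMF b) (hv : IsPMF v) :
    (∑ x, √(b x * v x)) ^ 2 ≤ 1 - tvDist b v ^ 2 := by
  have hcs := Finset.sum_sq_le_sum_mul_sum_of_sq_le_mul Finset.univ
    (r := fun x => √(b x * v x)) (f := fun x => min (b x) (v x)) (g := fun x => max (b x) (v x))
    (fun x _ => le_min (hb.1 x) (hv.1 x)) (fun x _ => (hb.1 x).trans (le_max_left _ _))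
    fun x _ => by rw [sq_sqrt (mul_nonneg (hb.1 x) (hv.1 x)), min_mul_max]
  have hsum : ∑ x, min (b x) (v x) + ∑ x, max (b x) (v x) = 2 := by
    rw [← Finset.sum_add_distrib]
    simp_rw [min_add_max]
    rw [Finset.sum_add_distrib, hb.2, hv.2]
    norm_num
  have hdiff : ∑ x, max (b x) (v x) - ∑ x, min (b x) (v x) = 2 * tvDist b v := by
    rw [← Finset.sum_sub_distrib]
    simp_rw [max_sub_min_eq_abs']
    rw [tvDist]
    ring
  calc _ ≤ _ := hcs
    _ = (1 - tvDist b v) * (1 + tvDist b v) := by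
        rw [show ∑ x, min (b x) (v x) = 1 - tvDist b v by linarith,
          show ∑ x, max (b x) (v x) = 1 + tvDist b v by linarith]
    _ = 1 - tvDist b v ^ 2 := by ring

lemma tvDist_sq_le_pinskerBHBound {b v : α → ℝ} (hb : IsPMF b) (hv : IsPMF v)
    (hsupp : ∀ x, v x = 0 → b x = 0) : tvDist b v ^ 2 ≤ pinskerBHBound (klNats b v) :=
  le_min (tvDist_sq_le_klNats_div_two hb hv hsupp)
    (by linarith [exp_neg_klNats_le_sq_sum_sqrt_mul hb hv.1 hsupp,
      sq_sum_sqrt_mul_le_one_sub_tvDist_sq hb hv])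

end Pinsker

section IProjection

variable {ι H : Type*} [Fintype ι] [Fintype H] {w : ι → ℝ} {p : H → ℝ}
  {𝒬 : Set (ι → H → ℝ)} {Q Qhat : ι → H → ℝ} {u : ℝ}

def meanKL (w : ι → ℝ) (p : H → ℝ) (Q : ι → H → ℝ) : ℝ :=
  ∑ i, w i * klNats (Q i) p

lemma sum_mul_klNats_smul_add_smul_le (hp : ∀ x, 0 < p x) (h𝒬 : Convex ℝ 𝒬)
    (h𝒬rule : ∀ Q' ∈ 𝒬, IsRule Q') (hQ : Q ∈ 𝒬) (hQhat : Qhat ∈ 𝒬)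
    (hmin : IsMinOn (meanKL w p) 𝒬 Qhat)
    (hw : ∀ i, 0 ≤ w i) (hu : u ∈ Set.Ioo 0 1) :
    ∑ i, w i * klNats (Q i) (((1 - u) • Q + u • Qhat) i)
      ≤ meanKL w p Q - meanKL w p Qhat := by
  obtain ⟨hu0, hu1⟩ := hu
  set Qu := (1 - u) • Q + u • Qhat
  have hQu : Qu ∈ 𝒬 := h𝒬 hQ hQhat (sub_pos.2 hu1).le hu0.le (by ring)
  have hgibbs : 0 ≤ ∑ i, w i * klNats (Qhat i) (Qu i) := Finset.sum_nonneg fun i _ =>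
    mul_nonneg (hw i) <| klNats_nonneg (h𝒬rule _ hQhat i) (h𝒬rule _ hQu i) fun x hx =>
      (eq_zero_and_eq_zero_of_mul_add_mul_eq_zero (sub_pos.2 hu1) hu0 ((h𝒬rule _ hQ i).1 x)
        ((h𝒬rule _ hQhat i).1 x) hx).2
  have hcomp : (1 - u) * meanKL w p Q + u * meanKL w p Qhat = meanKL w p Qu
      + (1 - u) * ∑ i, w i * klNats (Q i) (Qu i) + u * ∑ i, w i * klNats (Qhat i) (Qu i) := by
    simp only [meanKL, Finset.mul_sum, ← Finset.sum_add_distrib]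
    refine Finset.sum_congr rfl fun i _ => ?_
    linear_combination w i * klNats_smul_add_smul (h𝒬rule _ hQ i).1 (h𝒬rule _ hQhat i).1 hp
      (sub_pos.2 hu1) hu0
  have hQu_min : meanKL w p Qhat ≤ meanKL w p Qu := isMinOn_iff.1 hmin Qu hQu
  refine le_of_mul_le_mul_left ?_ (sub_pos.2 hu1)
  nlinarith [mul_nonneg hu0.le hgibbs]

lemma sq_mul_sum_mul_tvDist_le (hp : ∀ x, 0 < p x) (h𝒬 : Convex ℝ 𝒬)
    (h𝒬rule : ∀ Q' ∈ 𝒬, IsRule Q') (hQ : Q ∈ 𝒬) (hQhat : Qhat ∈ 𝒬)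
    (hmin : IsMinOn (meanKL w p) 𝒬 Qhat)
    (hw : IsPMF w) (hu : u ∈ Set.Ioo 0 1) :
    (u * ∑ i, w i * tvDist (Q i) (Qhat i)) ^ 2
      ≤ pinskerBHBound (meanKL w p Q - meanKL w p Qhat) := by
  set Qu := (1 - u) • Q + u • Qhat
  have hQu : Qu ∈ 𝒬 := h𝒬 hQ hQhat (sub_pos.2 hu.2).le hu.1.le (by ring)
  have hsupp : ∀ i x, Qu i x = 0 → Q i x = 0 := fun i x hx =>
    (eq_zero_and_eq_zero_of_mul_add_mul_eq_zero (sub_pos.2 hu.2) hu.1 ((h𝒬rule _ hQ i).1 x)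
      ((h𝒬rule _ hQhat i).1 x) hx).1
  calc (u * ∑ i, w i * tvDist (Q i) (Qhat i)) ^ 2 = (∑ i, w i * tvDist (Q i) (Qu i)) ^ 2 := by
        simp only [Qu, Pi.add_apply, Pi.smul_apply, tvDist_smul_add_smul hu.1.le, Finset.mul_sum]
        ring_nf
    _ ≤ ∑ i, w i * tvDist (Q i) (Qu i) ^ 2 := by
        simpa using (even_two.convexOn_pow (𝕜 := ℝ)).map_sum_le (t := Finset.univ)
          (p := fun i => tvDist (Q i) (Qu i)) (fun i _ => hw.1 i) hw.2 (fun i _ => mem_univ _)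
    _ ≤ ∑ i, w i * pinskerBHBound (klNats (Q i) (Qu i)) := by
        gcongr with i
        · exact hw.1 i
        · exact tvDist_sq_le_pinskerBHBound (h𝒬rule _ hQ i) (h𝒬rule _ hQu i) (hsupp i)
    _ ≤ pinskerBHBound (∑ i, w i * klNats (Q i) (Qu i)) := by
        simpa using concaveOn_pinskerBHBound.le_map_sum (t := Finset.univ)
          (p := fun i => klNats (Q i) (Qu i)) (fun i _ => hw.1 i) hw.2 (fun i _ => mem_univ _)
    _ ≤ _ := monotone_pinskerBHBound
        (sum_mul_klNats_smul_add_smul_le hp h𝒬 h𝒬rule hQ hQhat hmin hw.1 hu)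

theorem sum_mul_tvDist_le_sqrt_pinskerBHBound (hp : ∀ x, 0 < p x) (h𝒬 : Convex ℝ 𝒬)
    (h𝒬rule : ∀ Q' ∈ 𝒬, IsRule Q') (hQ : Q ∈ 𝒬) (hQhat : Qhat ∈ 𝒬)
    (hmin : IsMinOn (meanKL w p) 𝒬 Qhat)
    (hw : IsPMF w) :
    ∑ i, w i * tvDist (Q i) (Qhat i) ≤ √(pinskerBHBound (meanKL w p Q - meanKL w p Qhat)) :=
  le_of_forall_mem_Ioo_mul_le fun _ hu =>
    le_sqrt_of_sq_le (sq_mul_sum_mul_tvDist_le hp h𝒬 h𝒬rule hQ hQhat hmin hw hu)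

end IProjection

lemma sum_sum_mul_eq_sum_marginal_mul {C S : Type*} [Fintype C] [Fintype S] (P : C → S → ℝ)
    (f : S → ℝ) : ∑ c, ∑ s, P c s * f s = ∑ s, (∑ c, P c s) * f s := by
  simp_rw [Finset.sum_mul]
  exact Finset.sum_comm

lemma dsem_le_mul_sum_sum_mul_tvDist {C S H : Type*} [Fintype C] [Fintype S] [Fintype H]
    {PCS : C → S → ℝ} {L : C → H → ℝ} {Q Qhat : S → H → ℝ} {Lmax : ℝ}
    (hPCS : ∀ c s, 0 ≤ PCS c s) (hQ : IsRule Q) (hQhat : IsRule Qhat)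
    (hL : ∀ c h, 0 ≤ L c h ∧ L c h ≤ Lmax) :
    dsem PCS L Q Qhat ≤ Lmax * ∑ c, ∑ s, PCS c s * tvDist (Q s) (Qhat s) := by
  simp only [dsem, Finset.mul_sum]
  refine Finset.sum_le_sum fun c _ => Finset.sum_le_sum fun s _ => ?_
  rw [mul_left_comm]
  exact mul_le_mul_of_nonneg_left
    (sum_mul_sub_sum_mul_le_mul_tvDist (hQ s) (hQhat s) (hL c)) (hPCS c s)

theorem distortion_rate_bound_scheme1_general
    {C S H : Type*} [Fintype C] [Fintype S] [Fintype H]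
    (PC : C → ℝ) (hPC : IsPMF PC)
    (PSC : C → S → ℝ) (hPSC : ∀ c, IsPMF (PSC c))
    (PCS : C → S → ℝ) (hPCS : PCS = fun c s => PC c * PSC c s)
    (Lmax : ℝ) (L : C → H → ℝ) (hL : ∀ c h, 0 ≤ L c h ∧ L c h ≤ Lmax)
    (PH : H → ℝ) (hPH : IsPMF PH) (hPHpos : ∀ h, 0 < PH h)
    (𝒬 : Set (S → H → ℝ)) (h𝒬conv : Convex ℝ 𝒬)
    (h𝒬rule : ∀ Q' ∈ 𝒬, IsRule Q')
    (Q : S → H → ℝ) (hQmem : Q ∈ 𝒬)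
    (Qhat : S → H → ℝ) (hQhatmem : Qhat ∈ 𝒬)
    (hmin : ∀ Q' ∈ 𝒬, rateOf PCS PH Qhat ≤ rateOf PCS PH Q')
    (ΔR : ℝ) (hΔR : ΔR = rateOf PCS PH Q - rateOf PCS PH Qhat) :
    dsem PCS L Q Qhat ≤
      Lmax * min (Real.sqrt (ΔR / 2)) (Real.sqrt (1 - Real.exp (-ΔR))) := by
  subst hPCS
  set w : S → ℝ := fun s => ∑ c, PC c * PSC c s
  have hP : ∀ c s, 0 ≤ PC c * PSC c s := fun c s => mul_nonneg (hPC.1 c) ((hPSC c).1 s)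
  have hw : IsPMF w := ⟨fun s => Finset.sum_nonneg fun c _ => hP c s,
    by simp only [w, Finset.sum_comm (γ := S), ← Finset.mul_sum, (hPSC _).2, mul_one, hPC.2]⟩
  have hrate : ∀ Q', rateOf _ PH Q' = meanKL w PH Q' := fun _ =>
    sum_sum_mul_eq_sum_marginal_mul _ _
  have hLmax : 0 ≤ Lmax := by
    obtain ⟨c⟩ := hPC.nonempty
    obtain ⟨h⟩ := hPH.nonempty
    exact (hL c h).1.trans (hL c h).2
  calc dsem _ L Q Qhat ≤ Lmax * ∑ s, w s * tvDist (Q s) (Qhat s) := by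
        rw [← sum_sum_mul_eq_sum_marginal_mul]
        exact dsem_le_mul_sum_sum_mul_tvDist hP (h𝒬rule Q hQmem) (h𝒬rule Qhat hQhatmem) hL
    _ ≤ Lmax * √(pinskerBHBound ΔR) := by
        rw [hΔR, hrate, hrate]
        gcongr
        exact sum_mul_tvDist_le_sqrt_pinskerBHBound hPHpos h𝒬conv h𝒬rule hQmem hQhatmem
          (isMinOn_iff.2 fun Q' hQ' => by simpa only [hrate] using hmin Q' hQ') hw
    _ = _ := by rw [pinskerBHBound, sqrt_monotone.map_min]

/-- **Distortion-rate bound for scheme 1** (Lemma 2, Eq. (9)): if `Q̂` minimizes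
the expected divergence `𝓡` over a convex set of learning rules containing `Q`,
and `Δ_R = 𝓡(Q) − 𝓡(Q̂)`, then
`d_sem(Q, Q̂) ≤ L_max · min{√(Δ_R/2), √(1 − e^{−Δ_R})}`. -/
theorem distortion_rate_bound_scheme1
    {C S H : Type*} [Fintype C] [Fintype S] [Fintype H]
    [Nonempty C] [Nonempty S] [Nonempty H]
    (PC : C → ℝ) (hPC : IsPMF PC)
    (PSC : C → S → ℝ) (hPSC : ∀ c, IsPMF (PSC c))
    (PCS : C → S → ℝ) (hPCS : PCS = fun c s => PC c * PSC c s)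
    (Lmax : ℝ) (L : C → H → ℝ) (hL : ∀ c h, 0 ≤ L c h ∧ L c h ≤ Lmax)
    (PH : H → ℝ) (hPH : IsPMF PH) (hPHpos : ∀ h, 0 < PH h)
    (𝒬 : Set (S → H → ℝ)) (h𝒬conv : Convex ℝ 𝒬)
    (h𝒬rule : ∀ Q' ∈ 𝒬, IsRule Q')
    (Q : S → H → ℝ) (hQmem : Q ∈ 𝒬)
    (Qhat : S → H → ℝ) (hQhatmem : Qhat ∈ 𝒬)
    (hmin : ∀ Q' ∈ 𝒬, rateOf PCS PH Qhat ≤ rateOf PCS PH Q')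
    (ΔR : ℝ) (hΔR : ΔR = rateOf PCS PH Q - rateOf PCS PH Qhat) :
    dsem PCS L Q Qhat ≤
      Lmax * min (Real.sqrt (ΔR / 2)) (Real.sqrt (1 - Real.exp (-ΔR))) :=
  distortion_rate_bound_scheme1_general PC hPC PSC hPSC PCS hPCS Lmax L hL PH hPH hPHpos 𝒬 h𝒬conv
    h𝒬rule Q hQmem Qhat hQhatmem hmin ΔR hΔR
end
end

section
/- Distortion-rate bound for scheme 2 (Lemma 2, Eq. (10)): Assume the loss satisfies 0 ≤ L_c(h) ≤ L_max for all c∈𝒞, h∈ℋ. Let P_H be a full-support pmf on ℋ, let 𝒬 be a convex set of learning rules containing Q, and let Q̂ ∈ 𝒬 minimize 𝓡(Q') = E_{C,S}[D_KL(Q'(·|S) ‖ P_H)] over 𝒬 (divergences in nats). Suppose the available communication rate R is split as 𝓡(Q̂) = R − I(S;Ŝ|Ĥ), where I(S;Ŝ|Ĥ) ≥ 0 is the conditional mutual information consumed by conveying an intermediate dataset reconstruction Ŝ (scheme 2: Markov chain S → Ŝ → Ĥ). Set Δ_R = 𝓡(Q) − R. Then d_sem(Q, Q̂) ≤ L_max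 · min{ √((Δ_R + I(S;Ŝ|Ĥ))/2), √(1 − e^{−(Δ_R + I(S;Ŝ|Ĥ))}) }. -/
/-!
Write `D = 𝓡(Q) - 𝓡(Q̂)`, which equals `Δ_R + I(S;Ŝ|Ĥ)` by the rate split. For `0 < t < 1` the
mixture `Q_t = (1 - t) Q̂ + t Q` lies in `𝒬`, and the compensation identity
`𝓡(Q_t) = (1 - t) (𝓡(Q̂) - E D(Q̂‖Q_t)) + t (𝓡(Q) - E D(Q‖Q_t))` together with the minimality of
`Q̂` yields `E D(Q‖Q_t) ≤ D`. This expected divergence is the divergence between the joint laws of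
`(C, S, H)` under `Q` and `Q_t`, so by Pinsker and Bretagnolle–Huber their total variation
distance is at most `min {√(D/2), √(1 - e^{-D})}`. Losses in `[0, L_max]` turn this into a bound
on `d_sem(Q, Q_t) = (1 - t) d_sem(Q, Q̂)`, and `t → 0` gives the theorem.
-/

open Finset Filter Topology Classical

noncomputable section

/-- Conditional mutual information `I(X;Y|Z)` in nats of a joint pmf `p` on
`X × Y × Z`, defined as `∑ p(x,y,z)·ln( p(x,y,z)·p(z) / (p(x,z)·p(y,z)) )`
(with `0 · ln 0 = 0`). -/
def condMI {X Y Z : Type*} [Fintype X] [Fintype Y] [Fintype Z]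
    (p : X → Y → Z → ℝ) : ℝ :=
  ∑ x, ∑ y, ∑ z, p x y z *
    Real.log ((p x y z * ∑ x', ∑ y', p x' y' z) /
      ((∑ y', p x y' z) * (∑ x', p x' y z)))

open Real InformationTheory Set

lemma monotoneOn_add_one_mul_log_sub : MonotoneOn (fun x => (x + 1) * log x - 2 * (x - 1)) (Ioi 0) := by
  have hderiv : ∀ x ∈ Ioi (0 : ℝ), HasDerivAt (fun x => (x + 1) * log x - 2 * (x - 1))
      (log x + (x + 1) * x⁻¹ - 2) x := fun x hx =>
    ((((hasDerivAt_id x).add_const 1).mul (hasDerivAt_log (ne_of_gt hx))).sub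
      (((hasDerivAt_id x).sub_const 1).const_mul 2)).congr_deriv (by simp)
  refine monotoneOn_of_deriv_nonneg (convex_Ioi 0)
    (fun x hx => (hderiv x hx).continuousAt.continuousWithinAt)
    (fun x hx => (hderiv x (interior_subset hx)).differentiableAt.differentiableWithinAt)
    fun x hx => ?_
  rw [interior_Ioi] at hx
  have hlog := add_one_le_exp (-log x)
  rw [exp_neg, exp_log hx] at hlog
  have : (x + 1) * x⁻¹ = 1 + x⁻¹ := by rw [add_mul, mul_inv_cancel₀ (ne_of_gt hx)]; ring
  rw [(hderiv x hx).deriv]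
  linarith

lemma three_mul_sq_sub_one_le_mul_klFun {x : ℝ} (hx : 0 ≤ x) :
    3 * (x - 1) ^ 2 ≤ (2 * x + 4) * klFun x := by
  set φ := fun x => (2 * x + 4) * klFun x - 3 * (x - 1) ^ 2
  have hderiv : ∀ x ≠ (0 : ℝ), HasDerivAt φ (4 * ((x + 1) * log x - 2 * (x - 1))) x :=
    fun x hx => ((((hasDerivAt_id x).const_mul 2).add_const 4).mul (hasDerivAt_klFun hx)).sub
      ((((hasDerivAt_id x).sub_const 1).pow 2).const_mul 3) |>.congr_deriv (by simp [klFun]; ring)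
  have hg1 : (1 + 1) * log 1 - 2 * (1 - 1) = (0 : ℝ) := by simp
  have hmin : IsMinOn φ (Ici 0) 1 := by
    refine isMinOn_Ici_of_deriv (by fun_prop) (by fun_prop)
      (fun x hx => (hderiv x (ne_of_gt hx.1)).differentiableAt.differentiableWithinAt)
      (fun x hx =>
        (hderiv x (by linarith [mem_Ioi.1 hx])).differentiableAt.differentiableWithinAt)
      (fun x hx => ?_) (fun x hx => ?_)
    · rw [(hderiv x (ne_of_gt hx.1)).deriv]
      have := monotoneOn_add_one_mul_log_sub hx.1 (mem_Ioi.2 one_pos) hx.2.le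
      linarith
    · have hx0 : (0 : ℝ) < x := by linarith [mem_Ioi.1 hx]
      rw [(hderiv x hx0.ne').deriv]
      have := monotoneOn_add_one_mul_log_sub (mem_Ioi.2 one_pos) hx0 (le_of_lt hx)
      linarith
  have h := isMinOn_iff.1 hmin x (mem_Ici.2 hx)
  simp only [φ, klFun_one] at h
  linarith

section Pointwise

variable {a b : ℝ}

lemma mul_log_div_sub_add_eq_mul_klFun (hb : b ≠ 0) :
    a * log (a / b) - a + b = b * klFun (a / b) := by
  rw [klFun]
  field_simp
  ring

lemma mul_log_div_sub_add_nonneg (ha : 0 ≤ a) (hb : 0 ≤ b) (hab : b = 0 → a = 0) :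
    0 ≤ a * log (a / b) - a + b := by
  rcases hb.eq_or_lt with rfl | hb
  · simp [hab rfl]
  · rw [mul_log_div_sub_add_eq_mul_klFun hb.ne']
    exact mul_nonneg hb.le (klFun_nonneg (div_nonneg ha hb.le))

lemma three_mul_sq_sub_le_mul_log_div_sub_add (ha : 0 ≤ a) (hb : 0 ≤ b)
    (hab : b = 0 → a = 0) :
    3 * (a - b) ^ 2 ≤ (2 * a + 4 * b) * (a * log (a / b) - a + b) := by
  rcases hb.eq_or_lt with rfl | hb
  · simp [hab rfl]
  · have hx := three_mul_sq_sub_one_le_mul_klFun (div_nonneg ha hb.le)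
    rw [mul_log_div_sub_add_eq_mul_klFun hb.ne']
    calc 3 * (a - b) ^ 2 = b ^ 2 * (3 * (a / b - 1) ^ 2) := by field_simp
      _ ≤ b ^ 2 * ((2 * (a / b) + 4) * klFun (a / b)) := by gcongr
      _ = (2 * a + 4 * b) * (b * klFun (a / b)) := by field_simp

end Pointwise

lemma eq_zero_of_mul_add_mul_eq_zero {s t a b : ℝ} (hs : 0 ≤ s) (ht : 0 < t) (ha : 0 ≤ a)
    (hb : 0 ≤ b) (h : s * a + t * b = 0) : b = 0 :=
  (mul_eq_zero.1 ((add_eq_zero_iff_of_nonneg (mul_nonneg hs ha) (mul_nonneg ht.le hb)).1 h).2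
    ).resolve_left ht.ne'

section FinitePMF

variable {α : Type*} [Fintype α] {μ ν : α → ℝ}

lemma klNats_eq_sum_mul_log_div_sub_add (hμ : ∑ x, μ x = 1) (hν : ∑ x, ν x = 1) :
    klNats μ ν = ∑ x, (μ x * log (μ x / ν x) - μ x + ν x) := by
  rw [sum_add_distrib, sum_sub_distrib, hμ, hν, klNats]
  ring

lemma klNats_nonneg_s4 (hμ : IsPMF μ) (hν : IsPMF ν) (hac : ∀ x, ν x = 0 → μ x = 0) :
    0 ≤ klNats μ ν := by
  rw [klNats_eq_sum_mul_log_div_sub_add hμ.2 hν.2]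
  exact sum_nonneg fun x _ => mul_log_div_sub_add_nonneg (hμ.1 x) (hν.1 x) (hac x)

lemma sq_sum_abs_sub_le_two_mul_klNats (hμ : IsPMF μ) (hν : IsPMF ν)
    (hac : ∀ x, ν x = 0 → μ x = 0) :
    (∑ x, |μ x - ν x|) ^ 2 ≤ 2 * klNats μ ν := by
  rw [klNats_eq_sum_mul_log_div_sub_add hμ.2 hν.2]
  calc (∑ x, |μ x - ν x|) ^ 2
      ≤ (∑ x, (μ x * log (μ x / ν x) - μ x + ν x)) * ∑ x, (2 * μ x + 4 * ν x) / 3 := by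
        refine sum_sq_le_sum_mul_sum_of_sq_le_mul _
          (fun x _ => mul_log_div_sub_add_nonneg (hμ.1 x) (hν.1 x) (hac x))
          (fun x _ => by linarith [hμ.1 x, hν.1 x]) fun x _ => ?_
        have := three_mul_sq_sub_le_mul_log_div_sub_add (hμ.1 x) (hν.1 x) (hac x)
        rw [sq_abs]
        linarith
    _ = 2 * ∑ x, (μ x * log (μ x / ν x) - μ x + ν x) := by
        have : ∑ x, (2 * μ x + 4 * ν x) / 3 = 2 := by
          rw [← sum_div, sum_add_distrib, ← mul_sum, ← mul_sum, hμ.2, hν.2]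
          norm_num
        rw [this, mul_comm]

lemma IsPMF.exists_pos (hμ : IsPMF μ) : ∃ x, 0 < μ x := by
  obtain ⟨x, -, hx⟩ := exists_lt_of_sum_lt (s := univ) (f := fun _ => (0 : ℝ)) (g := μ)
    (by rw [hμ.2]; simp)
  exact ⟨x, hx⟩

lemma exp_neg_klNats_le_sq_sum_sqrt_mul_sqrt (hμ : IsPMF μ) (hν : IsPMF ν)
    (hac : ∀ x, ν x = 0 → μ x = 0) :
    exp (-klNats μ ν) ≤ (∑ x, √(μ x) * √(ν x)) ^ 2 := by
  set ρ := ∑ x, √(μ x) * √(ν x)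
  have hpos : ∀ x, 0 < μ x → 0 < ν x := fun x hx =>
    (hν.1 x).lt_of_ne fun h => hx.ne' (hac x h.symm)
  have hρ : 0 < ρ := by
    obtain ⟨x₀, hx₀⟩ := hμ.exists_pos
    exact (mul_pos (sqrt_pos.2 hx₀) (sqrt_pos.2 (hpos x₀ hx₀))).trans_le
      (single_le_sum (f := fun x => √(μ x) * √(ν x)) (fun x _ => by positivity)
        (mem_univ x₀))
  -- Gibbs' inequality against the normalised geometric mean `√μ √ν / ρ` gives
  -- `-klNats μ ν ≤ 2 log ρ`.
  set r := fun x => √(μ x) * √(ν x) / ρ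
  have hr : IsPMF r := ⟨fun x => by positivity, by rw [← sum_div, div_self hρ.ne']⟩
  have hacr : ∀ x, r x = 0 → μ x = 0 := fun x hx => by
    rcases mul_eq_zero.1 ((div_eq_zero_iff.1 hx).resolve_right hρ.ne') with h | h
    · exact le_antisymm (sqrt_eq_zero'.1 h) (hμ.1 x)
    · exact hac x (le_antisymm (sqrt_eq_zero'.1 h) (hν.1 x))
  have hterm : ∀ x, μ x * log (μ x / r x) = μ x * log (μ x / ν x) / 2 + μ x * log ρ := by
    intro x
    rcases (hμ.1 x).eq_or_lt with h | h
    · simp [← h]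
    · have hν' := hpos x h
      simp only [r]
      rw [log_div h.ne' (by positivity), log_div (by positivity) hρ.ne',
        log_mul (by positivity) (by positivity), log_sqrt h.le, log_sqrt hν'.le,
        log_div h.ne' hν'.ne']
      ring
  have hgibbs := klNats_nonneg_s4 hμ hr hacr
  rw [klNats, sum_congr rfl fun x _ => hterm x, sum_add_distrib, ← sum_div, ← sum_mul,
    hμ.2, one_mul] at hgibbs
  calc exp (-klNats μ ν) ≤ exp (log (ρ ^ 2)) := by
        rw [log_pow]
        exact exp_le_exp.2 (by rw [klNats]; push_cast; linarith)
    _ = ρ ^ 2 := exp_log (by positivity)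

lemma sq_sum_abs_sub_le_four_mul_one_sub_exp_neg_klNats (hμ : IsPMF μ) (hν : IsPMF ν)
    (hac : ∀ x, ν x = 0 → μ x = 0) :
    (∑ x, |μ x - ν x|) ^ 2 ≤ 4 * (1 - exp (-klNats μ ν)) := by
  set ρ := ∑ x, √(μ x) * √(ν x)
  have hsq : ∀ x, √(μ x) ^ 2 = μ x ∧ √(ν x) ^ 2 = ν x :=
    fun x => ⟨sq_sqrt (hμ.1 x), sq_sqrt (hν.1 x)⟩
  have hminus : ∑ x, (√(μ x) - √(ν x)) ^ 2 = 2 - 2 * ρ := by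
    simp only [sub_sq, hsq, sum_add_distrib, sum_sub_distrib, hμ.2, hν.2, mul_assoc,
      ← mul_sum]
    ring
  have hplus : ∑ x, (√(μ x) + √(ν x)) ^ 2 = 2 + 2 * ρ := by
    simp only [add_sq, hsq, sum_add_distrib, hμ.2, hν.2, mul_assoc, ← mul_sum]
    ring
  calc (∑ x, |μ x - ν x|) ^ 2
      ≤ (∑ x, (√(μ x) - √(ν x)) ^ 2) * ∑ x, (√(μ x) + √(ν x)) ^ 2 :=
        sum_sq_le_sum_mul_sum_of_sq_le_mul _ (fun _ _ => sq_nonneg _) (fun _ _ => sq_nonneg _)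
          fun x _ => by rw [sq_abs, ← mul_pow, mul_comm, ← sq_sub_sq, (hsq x).1, (hsq x).2]
    _ = 4 * (1 - ρ ^ 2) := by rw [hminus, hplus]; ring
    _ ≤ 4 * (1 - exp (-klNats μ ν)) := by
        linarith [exp_neg_klNats_le_sq_sum_sqrt_mul_sqrt hμ hν hac]

lemma sum_abs_sub_le_two_mul_min_sqrt (hμ : IsPMF μ) (hν : IsPMF ν)
    (hac : ∀ x, ν x = 0 → μ x = 0) {D : ℝ} (hD : klNats μ ν ≤ D) :
    ∑ x, |μ x - ν x| ≤ 2 * min √(D / 2) √(1 - exp (-D)) := by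
  have hpinsker := sq_sum_abs_sub_le_two_mul_klNats hμ hν hac
  have hbh := sq_sum_abs_sub_le_four_mul_one_sub_exp_neg_klNats hμ hν hac
  have hexp : exp (-D) ≤ exp (-klNats μ ν) := exp_le_exp.2 (neg_le_neg hD)
  rw [mul_min_of_nonneg _ _ zero_le_two, le_min_iff]
  constructor
  · linarith [le_sqrt_of_sq_le (x := (∑ x, |μ x - ν x|) / 2) (y := D / 2) (by nlinarith)]
  · linarith [le_sqrt_of_sq_le (x := (∑ x, |μ x - ν x|) / 2) (y := 1 - exp (-D)) (by nlinarith)]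

lemma klNats_smul_add_smul_s4 {u v p : α → ℝ} (hu : ∀ x, 0 ≤ u x) (hv : ∀ x, 0 ≤ v x)
    (hp : ∀ x, p x ≠ 0) {t : ℝ} (ht0 : 0 ≤ t) (ht1 : t ≤ 1) :
    klNats ((1 - t) • u + t • v) p =
      (1 - t) * (klNats u p - klNats u ((1 - t) • u + t • v)) +
        t * (klNats v p - klNats v ((1 - t) • u + t • v)) := by
  simp only [klNats, mul_sum, ← sum_sub_distrib, ← sum_add_distrib]
  refine sum_congr rfl fun x _ => ?_
  simp only [Pi.add_apply, Pi.smul_apply, smul_eq_mul, ← mul_sub]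
  set w := (1 - t) * u x + t * v x
  have hsplit : ∀ a, 0 ≤ a → 0 < w →
      a * (log (a / p x) - log (a / w)) = a * log (w / p x) := by
    intro a ha hw
    rcases ha.eq_or_lt with rfl | ha
    · simp
    · rw [log_div ha.ne' (hp x), log_div ha.ne' hw.ne', log_div hw.ne' (hp x)]
      ring
  have hu' : 0 ≤ (1 - t) * u x := mul_nonneg (sub_nonneg.2 ht1) (hu x)
  have hv' : 0 ≤ t * v x := mul_nonneg ht0 (hv x)
  rcases (show 0 ≤ w from add_nonneg hu' hv').eq_or_lt with hw | hw
  · obtain ⟨h1, h2⟩ := (add_eq_zero_iff_of_nonneg hu' hv').1 hw.symm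
    rw [← hw, ← mul_assoc, ← mul_assoc, h1, h2]
    simp
  · rw [hsplit _ (hu x) hw, hsplit _ (hv x) hw]
    ring

lemma sum_mul_le_half_mul_sum_abs {d l : α → ℝ} {M : ℝ}
    (hd : ∑ x, d x = 0) (hl : ∀ x, 0 ≤ l x ∧ l x ≤ M) :
    ∑ x, d x * l x ≤ M / 2 * ∑ x, |d x| := by
  have hpt : ∀ x, d x * l x ≤ M / 2 * |d x| + M / 2 * d x := fun x => by
    rcases le_or_gt 0 (d x) with h | h
    · rw [abs_of_nonneg h]; nlinarith [hl x]
    · rw [abs_of_neg h]; nlinarith [hl x]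
  calc ∑ x, d x * l x ≤ ∑ x, (M / 2 * |d x| + M / 2 * d x) := sum_le_sum fun x _ => hpt x
    _ = M / 2 * ∑ x, |d x| := by
        rw [sum_add_distrib, ← mul_sum, ← mul_sum, hd, mul_zero, add_zero]

end FinitePMF

section LearningRules

variable {C S H : Type*} [Fintype C] [Fintype S] [Fintype H]

def expectedKL (PCS : C → S → ℝ) (Q Q' : S → H → ℝ) : ℝ :=
  ∑ c, ∑ s, PCS c s * klNats (Q s) (Q' s)

def jointLaw (PCS : C → S → ℝ) (Q : S → H → ℝ) : C × S × H → ℝ :=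
  fun x => PCS x.1 x.2.1 * Q x.2.1 x.2.2

variable {PCS : C → S → ℝ}

lemma isPMF_jointLaw (hP0 : ∀ c s, 0 ≤ PCS c s) (hP1 : ∑ c, ∑ s, PCS c s = 1)
    {Q : S → H → ℝ} (hQ : IsRule Q) : IsPMF (jointLaw PCS Q) :=
  ⟨fun x => mul_nonneg (hP0 _ _) ((hQ _).1 _), by
    simp only [jointLaw, Fintype.sum_prod_type, ← mul_sum, (hQ _).2, mul_one, hP1]⟩

lemma klNats_jointLaw (Q Q' : S → H → ℝ) :
    klNats (jointLaw PCS Q) (jointLaw PCS Q') = expectedKL PCS Q Q' := by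
  simp only [klNats, jointLaw, expectedKL, Fintype.sum_prod_type, mul_sum]
  refine sum_congr rfl fun c _ => sum_congr rfl fun s _ => sum_congr rfl fun h _ => ?_
  by_cases hcs : PCS c s = 0
  · simp [hcs]
  · rw [mul_div_mul_left _ _ hcs]
    ring

lemma rateOf_smul_add_smul {PH : H → ℝ} (hPH : ∀ h, PH h ≠ 0) {Q₀ Q₁ : S → H → ℝ}
    (hQ₀ : ∀ s h, 0 ≤ Q₀ s h) (hQ₁ : ∀ s h, 0 ≤ Q₁ s h) {t : ℝ} (ht0 : 0 ≤ t)
    (ht1 : t ≤ 1) :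
    rateOf PCS PH ((1 - t) • Q₀ + t • Q₁) =
      (1 - t) * (rateOf PCS PH Q₀ - expectedKL PCS Q₀ ((1 - t) • Q₀ + t • Q₁)) +
        t * (rateOf PCS PH Q₁ - expectedKL PCS Q₁ ((1 - t) • Q₀ + t • Q₁)) := by
  simp only [rateOf, expectedKL, mul_sum, ← sum_sub_distrib, ← sum_add_distrib]
  refine sum_congr rfl fun c _ => sum_congr rfl fun s _ => ?_
  rw [show ((1 - t) • Q₀ + t • Q₁) s = (1 - t) • Q₀ s + t • Q₁ s from rfl,
    klNats_smul_add_smul_s4 (hQ₀ s) (hQ₁ s) hPH ht0 ht1]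
  ring

lemma expectedKL_le_rateOf_sub_of_isMinOn {PH : H → ℝ} (hPH : ∀ h, PH h ≠ 0)
    (hP0 : ∀ c s, 0 ≤ PCS c s) {𝒬 : Set (S → H → ℝ)} (h𝒬 : Convex ℝ 𝒬)
    (hrule : ∀ Q' ∈ 𝒬, IsRule Q') {Q Qhat : S → H → ℝ} (hQ : Q ∈ 𝒬) (hQhat : Qhat ∈ 𝒬)
    (hmin : IsMinOn (rateOf PCS PH) 𝒬 Qhat) {t : ℝ} (ht0 : 0 < t) (ht1 : t < 1) :
    expectedKL PCS Q ((1 - t) • Qhat + t • Q) ≤ rateOf PCS PH Q - rateOf PCS PH Qhat := by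
  set Qt := (1 - t) • Qhat + t • Q
  have hQt : Qt ∈ 𝒬 := h𝒬 hQhat hQ (by linarith) ht0.le (by ring)
  have hQhat_ac : ∀ s h, Qt s h = 0 → Qhat s h = 0 := fun s h hzero =>
    eq_zero_of_mul_add_mul_eq_zero ht0.le (sub_pos.2 ht1) ((hrule _ hQ s).1 h)
      ((hrule _ hQhat s).1 h) ((add_comm _ _).trans hzero)
  have hA : 0 ≤ expectedKL PCS Qhat Qt := sum_nonneg fun c _ => sum_nonneg fun s _ =>
    mul_nonneg (hP0 c s) (klNats_nonneg_s4 (hrule _ hQhat s) (hrule _ hQt s) (hQhat_ac s))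
  have hrate := isMinOn_iff.1 hmin _ hQt
  rw [rateOf_smul_add_smul hPH (fun s => (hrule _ hQhat s).1) (fun s => (hrule _ hQ s).1)
    ht0.le ht1.le] at hrate
  have : t * expectedKL PCS Q Qt ≤ t * (rateOf PCS PH Q - rateOf PCS PH Qhat) := by
    nlinarith [mul_nonneg (by linarith : (0 : ℝ) ≤ 1 - t) hA]
  exact le_of_mul_le_mul_left this ht0

lemma dsem_smul_add_smul (L : C → H → ℝ) (Q Q₀ : S → H → ℝ) (t : ℝ) :
    dsem PCS L Q ((1 - t) • Q₀ + t • Q) = (1 - t) * dsem PCS L Q Q₀ := by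
  simp only [dsem, trueLoss, mul_sum, ← sum_sub_distrib]
  refine sum_congr rfl fun c _ => sum_congr rfl fun s _ => sum_congr rfl fun h _ => ?_
  simp only [Pi.add_apply, Pi.smul_apply, smul_eq_mul]
  ring

lemma dsem_le_mul_sum_abs_sub_jointLaw (hP0 : ∀ c s, 0 ≤ PCS c s) {L : C → H → ℝ}
    {Lmax : ℝ} (hL : ∀ c h, 0 ≤ L c h ∧ L c h ≤ Lmax) {Q Q' : S → H → ℝ}
    (hsum : ∀ s, ∑ h, Q' s h = ∑ h, Q s h) :
    dsem PCS L Q Q' ≤ Lmax / 2 * ∑ x, |jointLaw PCS Q x - jointLaw PCS Q' x| := by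
  calc dsem PCS L Q Q' = ∑ c, ∑ s, PCS c s * ∑ h, (Q' s h - Q s h) * L c h := by
        simp only [dsem, trueLoss, ← sum_sub_distrib, sub_mul]
    _ ≤ ∑ c, ∑ s, PCS c s * (Lmax / 2 * ∑ h, |Q' s h - Q s h|) := by
        gcongr with c _ s _
        · exact hP0 c s
        · exact sum_mul_le_half_mul_sum_abs (by rw [sum_sub_distrib, hsum, sub_self]) (hL c)
    _ = Lmax / 2 * ∑ x, |jointLaw PCS Q x - jointLaw PCS Q' x| := by
        simp only [jointLaw, Fintype.sum_prod_type, ← mul_sub, abs_mul,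
          abs_of_nonneg (hP0 _ _), abs_sub_comm (Q _ _), mul_sum]
        refine sum_congr rfl fun c _ => sum_congr rfl fun s _ => sum_congr rfl fun h _ => ?_
        ring

lemma one_sub_mul_dsem_le_of_isMinOn {PH : H → ℝ} (hPH : ∀ h, PH h ≠ 0)
    (hP0 : ∀ c s, 0 ≤ PCS c s) (hP1 : ∑ c, ∑ s, PCS c s = 1) {L : C → H → ℝ} {Lmax : ℝ}
    (hL : ∀ c h, 0 ≤ L c h ∧ L c h ≤ Lmax) {𝒬 : Set (S → H → ℝ)} (h𝒬 : Convex ℝ 𝒬)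
    (hrule : ∀ Q' ∈ 𝒬, IsRule Q') {Q Qhat : S → H → ℝ} (hQ : Q ∈ 𝒬) (hQhat : Qhat ∈ 𝒬)
    (hmin : IsMinOn (rateOf PCS PH) 𝒬 Qhat) {t : ℝ} (ht0 : 0 < t) (ht1 : t < 1) :
    (1 - t) * dsem PCS L Q Qhat ≤
      Lmax * min √((rateOf PCS PH Q - rateOf PCS PH Qhat) / 2)
        √(1 - exp (-(rateOf PCS PH Q - rateOf PCS PH Qhat))) := by
  set Qt := (1 - t) • Qhat + t • Q
  have hQt : IsRule Qt := hrule _ (h𝒬 hQhat hQ (sub_pos.2 ht1).le ht0.le (by ring))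
  have hμ := isPMF_jointLaw hP0 hP1 (hrule _ hQ)
  have hLmax : 0 ≤ Lmax := by
    obtain ⟨x, -⟩ := hμ.exists_pos
    exact (hL x.1 x.2.2).1.trans (hL x.1 x.2.2).2
  have hQ_ac : ∀ x, jointLaw PCS Qt x = 0 → jointLaw PCS Q x = 0 := fun x hx => by
    rcases mul_eq_zero.1 hx with h | h
    · exact mul_eq_zero_of_left h _
    · exact mul_eq_zero_of_right _ (eq_zero_of_mul_add_mul_eq_zero (sub_pos.2 ht1).le ht0
        ((hrule _ hQhat _).1 _) ((hrule _ hQ _).1 _) h)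
  -- Pinsker and Bretagnolle–Huber are applied to the joint laws on `C × S × H`, so that the
  -- square roots are taken of the expected divergence rather than averaged over `(C, S)`.
  have hTV := sum_abs_sub_le_two_mul_min_sqrt hμ (isPMF_jointLaw hP0 hP1 hQt) hQ_ac
    ((klNats_jointLaw Q Qt).trans_le
      (expectedKL_le_rateOf_sub_of_isMinOn hPH hP0 h𝒬 hrule hQ hQhat hmin ht0 ht1))
  calc (1 - t) * dsem PCS L Q Qhat = dsem PCS L Q Qt :=
        (dsem_smul_add_smul L Q Qhat t).symm
    _ ≤ Lmax / 2 * ∑ x, |jointLaw PCS Q x - jointLaw PCS Qt x| :=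
        dsem_le_mul_sum_abs_sub_jointLaw hP0 hL fun s => by rw [(hQt s).2, (hrule _ hQ s).2]
    _ ≤ Lmax / 2 * (2 * _) := mul_le_mul_of_nonneg_left hTV (div_nonneg hLmax zero_le_two)
    _ = _ := by ring

end LearningRules

lemma le_of_forall_one_sub_mul_le {a b : ℝ} (h : ∀ t, 0 < t → t < 1 → (1 - t) * a ≤ b) :
    a ≤ b := by
  have hlim : Tendsto (fun t : ℝ => (1 - t) * a) (𝓝[>] 0) (𝓝 a) := by
    have : Tendsto (fun t : ℝ => (1 - t) * a) (𝓝 0) (𝓝 ((1 - 0) * a)) :=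
      ((continuous_const.sub continuous_id).mul continuous_const).tendsto 0
    simpa using this.mono_left nhdsWithin_le_nhds
  exact le_of_tendsto hlim <| by
    filter_upwards [Ioo_mem_nhdsGT one_pos] with t ht using h t ht.1 ht.2

theorem distortion_rate_bound_scheme2_general
    {C S H : Type*} [Fintype C] [Fintype S] [Fintype H]
    (PC : C → ℝ) (hPC : IsPMF PC)
    (PSC : C → S → ℝ) (hPSC : ∀ c, IsPMF (PSC c))
    (PCS : C → S → ℝ) (hPCS : PCS = fun c s => PC c * PSC c s)
    (Lmax : ℝ) (L : C → H → ℝ) (hL : ∀ c h, 0 ≤ L c h ∧ L c h ≤ Lmax)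
    (PH : H → ℝ) (hPHpos : ∀ h, 0 < PH h)
    (𝒬 : Set (S → H → ℝ)) (h𝒬conv : Convex ℝ 𝒬)
    (h𝒬rule : ∀ Q' ∈ 𝒬, IsRule Q')
    (Q : S → H → ℝ) (hQmem : Q ∈ 𝒬)
    (Qhat : S → H → ℝ) (hQhatmem : Qhat ∈ 𝒬)
    (hmin : ∀ Q' ∈ 𝒬, rateOf PCS PH Qhat ≤ rateOf PCS PH Q')
    -- scheme 2: joint law of `(S, Ŝ, Ĥ)` with `Ŝ` the intermediate dataset
    -- reconstruction, forming a Markov chain `S → Ŝ → Ĥ`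
    {S' : Type*} [Fintype S']
    (PJ : S → S' → H → ℝ)
    (R : ℝ) (hsplit : rateOf PCS PH Qhat = R - condMI PJ)
    (ΔR : ℝ) (hΔR : ΔR = rateOf PCS PH Q - R) :
    dsem PCS L Q Qhat ≤
      Lmax * min (Real.sqrt ((ΔR + condMI PJ) / 2))
        (Real.sqrt (1 - Real.exp (-(ΔR + condMI PJ)))) := by
  have hP0 : ∀ c s, 0 ≤ PCS c s := fun c s => hPCS ▸ mul_nonneg (hPC.1 c) ((hPSC c).1 s)
  have hP1 : ∑ c, ∑ s, PCS c s = 1 := by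
    simp only [hPCS, ← mul_sum, (hPSC _).2, mul_one, hPC.2]
  rw [show ΔR + condMI PJ = rateOf PCS PH Q - rateOf PCS PH Qhat by rw [hΔR, hsplit]; ring]
  exact le_of_forall_one_sub_mul_le fun t ht0 ht1 =>
    one_sub_mul_dsem_le_of_isMinOn (fun h => (hPHpos h).ne') hP0 hP1 hL h𝒬conv h𝒬rule hQmem
      hQhatmem (isMinOn_iff.2 hmin) ht0 ht1

/-- **Distortion-rate bound for scheme 2** (Lemma 2, Eq. (10)): if `Q̂` minimizes
the expected divergence `𝓡` over a convex set of learning rules containing `Q`,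
the available rate `R` splits as `𝓡(Q̂) = R − I(S;Ŝ|Ĥ)` where `I(S;Ŝ|Ĥ)` is the
conditional mutual information of the joint law of `(S, Ŝ, Ĥ)` with Markov
chain `S → Ŝ → Ĥ` (scheme 2), and `Δ_R = 𝓡(Q) − R`, then
`d_sem(Q, Q̂) ≤ L_max · min{√((Δ_R + I(S;Ŝ|Ĥ))/2), √(1 − e^{−(Δ_R + I(S;Ŝ|Ĥ))})}`. -/
theorem distortion_rate_bound_scheme2
    {C S H : Type*} [Fintype C] [Fintype S] [Fintype H]
    [Nonempty C] [Nonempty S] [Nonempty H]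
    (PC : C → ℝ) (hPC : IsPMF PC)
    (PSC : C → S → ℝ) (hPSC : ∀ c, IsPMF (PSC c))
    (PCS : C → S → ℝ) (hPCS : PCS = fun c s => PC c * PSC c s)
    (Lmax : ℝ) (L : C → H → ℝ) (hL : ∀ c h, 0 ≤ L c h ∧ L c h ≤ Lmax)
    (PH : H → ℝ) (hPH : IsPMF PH) (hPHpos : ∀ h, 0 < PH h)
    (𝒬 : Set (S → H → ℝ)) (h𝒬conv : Convex ℝ 𝒬)
    (h𝒬rule : ∀ Q' ∈ 𝒬, IsRule Q')
    (Q : S → H → ℝ) (hQmem : Q ∈ 𝒬)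
    (Qhat : S → H → ℝ) (hQhatmem : Qhat ∈ 𝒬)
    (hmin : ∀ Q' ∈ 𝒬, rateOf PCS PH Qhat ≤ rateOf PCS PH Q')
    -- scheme 2: joint law of `(S, Ŝ, Ĥ)` with `Ŝ` the intermediate dataset
    -- reconstruction, forming a Markov chain `S → Ŝ → Ĥ`
    {S' : Type*} [Fintype S'] [Nonempty S']
    (PJ : S → S' → H → ℝ) (hPJ0 : ∀ s t u, 0 ≤ PJ s t u)
    (hPJ1 : ∑ s, ∑ t, ∑ u, PJ s t u = 1)
    (hMarkov : ∀ s t u, PJ s t u * (∑ s', ∑ u', PJ s' t u') =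
      (∑ u', PJ s t u') * (∑ s', PJ s' t u))
    (R : ℝ) (hsplit : rateOf PCS PH Qhat = R - condMI PJ)
    (ΔR : ℝ) (hΔR : ΔR = rateOf PCS PH Q - R) :
    dsem PCS L Q Qhat ≤
      Lmax * min (Real.sqrt ((ΔR + condMI PJ) / 2))
        (Real.sqrt (1 - Real.exp (-(ΔR + condMI PJ)))) :=
  distortion_rate_bound_scheme2_general PC hPC PSC hPSC PCS hPCS Lmax L hL PH hPHpos 𝒬 h𝒬conv h𝒬rule
    Q hQmem Qhat hQhatmem hmin PJ R hsplit ΔR hΔR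
end
end
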